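/- arXiv:2205.00861 — 11 statements merged into one kernel-verified Lean document; each statement's English description precedes it below -/
import Mathlib

section
/- Let n, k, t be positive integers with t ≤ k ≤ n. If 𝓗 ⊆ 2^[n] is maximally cover-free, at most t-intersecting and k-uniform, then |𝓗|·C(k−1, t+1) ≤ C(n−|𝓗|, t+1), where C(·,·) denotes the binomial coefficient. -/
open Finset

/-- `H` is a family of subsets of `[n] = {1, …, n}`. -/
def OnGround (n : ℕ) (H : Finset (Finset ℕ)) : Prop :=
  ∀ A ∈ H, A ⊆ Finset.Icc 1 n

/-- `H` is `k`-uniform: every member has cardinality `k`. -/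
def Uniform (k : ℕ) (H : Finset (Finset ℕ)) : Prop :=
  ∀ A ∈ H, A.card = k

/-- `H` is at most `t`-intersecting: distinct members meet in at most `t` elements. -/
def AtMostIntersecting (t : ℕ) (H : Finset (Finset ℕ)) : Prop :=
  ∀ A ∈ H, ∀ B ∈ H, A ≠ B → (A ∩ B).card ≤ t

/-- `H` is maximally cover-free: no member is contained in the union of the others. -/
def MaxCoverFree (H : Finset (Finset ℕ)) : Prop :=
  ∀ A ∈ H, ¬ A ⊆ (H.erase A).biUnion id

/-- `ϖ(n,k,t)`: the maximum size of an at most `t`-intersecting, `k`-uniform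
family of subsets of `[n]`. -/
noncomputable def varpi (n k t : ℕ) : ℕ :=
  sSup {m | ∃ H : Finset (Finset ℕ),
    OnGround n H ∧ Uniform k H ∧ AtMostIntersecting t H ∧ H.card = m}

/-- For positive integers `t ≤ k ≤ n`, if `𝓗 ⊆ 2^[n]` is maximally
cover-free, at most `t`-intersecting and `k`-uniform, then
`|𝓗| · C(k−1, t+1) ≤ C(n−|𝓗|, t+1)`. -/
theorem stmt1 (n k t : ℕ) (hn : 0 < n) (hk : 0 < k) (ht : 0 < t)
    (htk : t ≤ k) (hkn : k ≤ n)
    (H : Finset (Finset ℕ)) (hg : OnGround n H) (hu : Uniform k H)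
    (hi : AtMostIntersecting t H) (hm : MaxCoverFree H) :
    H.card * Nat.choose (k - 1) (t + 1) ≤ Nat.choose (n - H.card) (t + 1) := by
  classical
  have hx : ∀ A ∈ H, ∃ x, x ∈ A ∧ x ∉ (H.erase A).biUnion id := by
    intro A hA
    have := hm A hA
    rw [Finset.subset_iff] at this
    push_neg at this
    exact this
  choose! x hx1 hx2 using hx
  set X : Finset ℕ := H.image x with hX
  have hown : ∀ A ∈ H, ∀ B ∈ H, x A ∈ B → A = B := by
    intro A hA B hB hxB
    by_contra hne
    exact hx2 A hA (Finset.mem_biUnion.mpr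
      ⟨B, Finset.mem_erase.mpr ⟨Ne.symm hne, hB⟩, hxB⟩)
  have hinj : Set.InjOn x H := by
    intro A hA B hB hEq
    have hxBA : x B ∈ A := hEq ▸ hx1 A hA
    exact (hown B hB A hA hxBA).symm
  have hXcard : X.card = H.card := Finset.card_image_of_injOn hinj
  have hAX : ∀ A ∈ H, A ∩ X = {x A} := by
    intro A hA
    ext y
    simp only [Finset.mem_inter, Finset.mem_image, Finset.mem_singleton, hX]
    constructor
    · rintro ⟨hyA, B, hB, rfl⟩
      rw [hown B hB A hA hyA]
    · rintro rfl
      exact ⟨hx1 A hA, A, hA, rfl⟩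
  have hsd : ∀ A ∈ H, (A \ X).card = k - 1 := by
    intro A hA
    have h1 := Finset.card_sdiff_add_card_inter A X
    rw [hAX A hA, Finset.card_singleton, hu A hA] at h1
    omega
  set T : Finset (Finset ℕ) := H.biUnion (fun A => (A \ X).powersetCard (t + 1))
    with hT
  have hdisj : ∀ A ∈ H, ∀ B ∈ H, A ≠ B →
      Disjoint ((A \ X).powersetCard (t + 1)) ((B \ X).powersetCard (t + 1)) := by
    intro A hA B hB hne
    rw [Finset.disjoint_left]
    intro S hSA hSB
    rw [Finset.mem_powersetCard] at hSA hSB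
    have : S ⊆ A ∩ B := Finset.subset_inter
      (hSA.1.trans (Finset.sdiff_subset)) (hSB.1.trans (Finset.sdiff_subset))
    have := Finset.card_le_card this
    have := hi A hA B hB hne
    omega
  have hTcard : T.card = H.card * Nat.choose (k - 1) (t + 1) := by
    rw [hT, Finset.card_biUnion hdisj]
    rw [Finset.sum_congr rfl (fun A hA => by
      rw [Finset.card_powersetCard, hsd A hA])]
    rw [Finset.sum_const, smul_eq_mul]
  have hXsub : X ⊆ Finset.Icc 1 n := by
    intro y hy
    rw [hX, Finset.mem_image] at hy
    obtain ⟨A, hA, rfl⟩ := hy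
    exact hg A hA (hx1 A hA)
  have hTsub : T ⊆ (Finset.Icc 1 n \ X).powersetCard (t + 1) := by
    intro S hS
    rw [hT, Finset.mem_biUnion] at hS
    obtain ⟨A, hA, hSA⟩ := hS
    rw [Finset.mem_powersetCard] at hSA ⊢
    exact ⟨hSA.1.trans (Finset.sdiff_subset_sdiff (hg A hA) le_rfl), hSA.2⟩
  have hgcard : (Finset.Icc 1 n \ X).card = n - H.card := by
    rw [Finset.card_sdiff_of_subset hXsub, hXcard, Nat.card_Icc]
    omega
  calc H.card * Nat.choose (k - 1) (t + 1) = T.card := hTcard.symm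
    _ ≤ ((Finset.Icc 1 n \ X).powersetCard (t + 1)).card :=
        Finset.card_le_card hTsub
    _ = Nat.choose (n - H.card) (t + 1) := by
        rw [Finset.card_powersetCard, hgcard]
end

section
/- Let n, k, t be positive integers with t ≤ k ≤ n and n < (1/2)·k·(k/t + 1) (as rational numbers). Then there exists a positive integer m with n < mk − (1/2)m(m−1)t, and, letting m′ be the least such positive integer, ϖ(n,k,t) = m′ − 1. -/
open Finset

/-!
Any `m` members of a `k`-uniform, at most `t`-intersecting family cover at least
`m k - t (m choose 2)` points (Bonferroni), so no family on `[n]` has `m'` members. Conversely,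
for `m = m' - 1` one has `m t < k`, and `m` sets of size `k` are realised on
`m p + t (m choose 2) ≤ n` points by giving each vertex of the complete graph `K_m` a private
block of `p = k - (m - 1) t` points and each edge a block of `t` points shared by its two ends.
-/

lemma Finset.disjSum_inter_disjSum {α β : Type*} [DecidableEq α] [DecidableEq β]
    (s s' : Finset α) (u u' : Finset β) :
    s.disjSum u ∩ s'.disjSum u' = (s ∩ s').disjSum (u ∩ u') := by
  ext (x | x) <;> simp

namespace SimpleGraph

variable {V : Type*} [Fintype V] [DecidableEq V] (G : SimpleGraph V) [DecidableRel G.Adj]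

def incidentEdges (v : V) : Finset G.edgeSet := {e | v ∈ (e : Sym2 V)}

lemma card_incidentEdges (v : V) : #(G.incidentEdges v) = G.degree v := by
  rw [← card_incidenceFinset_eq_degree, ← card_map (Function.Embedding.subtype _)]
  congr 1
  ext e
  simp [incidentEdges, incidenceSet, and_comm]

lemma card_incidentEdges_inter_le {v w : V} (hvw : v ≠ w) :
    #(G.incidentEdges v ∩ G.incidentEdges w) ≤ 1 := by
  refine card_le_one.2 fun e he e' he' => Subtype.ext ?_
  simp only [incidentEdges, mem_inter, mem_filter, mem_univ, true_and] at he he'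
  rw [(Sym2.mem_and_mem_iff hvw).1 he, (Sym2.mem_and_mem_iff hvw).1 he']

variable (p t : ℕ)

def incidenceBlock (v : V) : Finset (V × Fin p ⊕ G.edgeSet × Fin t) :=
  ({v} ×ˢ univ).disjSum (G.incidentEdges v ×ˢ univ)

lemma card_incidenceBlock (v : V) : #(G.incidenceBlock p t v) = p + G.degree v * t := by
  simp [incidenceBlock, card_disjSum, card_product, card_incidentEdges]

lemma card_incidenceBlock_inter_le {v w : V} (hvw : v ≠ w) :
    #(G.incidenceBlock p t v ∩ G.incidenceBlock p t w) ≤ t := by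
  rw [incidenceBlock, incidenceBlock, disjSum_inter_disjSum, card_disjSum, product_inter_product,
    product_inter_product, singleton_inter_of_notMem (by simpa using hvw)]
  simpa using Nat.mul_le_mul_right t (G.card_incidentEdges_inter_le hvw)

lemma incidenceBlock_injective (hp : 0 < p) : Function.Injective (G.incidenceBlock p t) := by
  intro v w h
  have hv : Sum.inl (v, ⟨0, hp⟩) ∈ G.incidenceBlock p t w := h ▸ by simp [incidenceBlock]
  exact (by simpa [incidenceBlock] using hv : w = v).symm

end SimpleGraph

lemma card_mul_le_card_biUnion_add {α : Type*} [DecidableEq α] {k t : ℕ}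
    (s : Finset (Finset α)) (hu : ∀ A ∈ s, #A = k)
    (hi : ∀ A ∈ s, ∀ B ∈ s, A ≠ B → #(A ∩ B) ≤ t) :
    #s * k ≤ #(s.biUnion id) + t * (#s).choose 2 := by
  induction s using Finset.induction_on with
  | empty => simp
  | @insert A s hA ih =>
    have hAk : #A = k := hu A (mem_insert_self A s)
    have hmeet : #(A ∩ s.biUnion id) ≤ #s * t := by
      rw [inter_biUnion]
      refine card_biUnion_le_card_mul s _ t fun B hB => ?_
      exact hi A (mem_insert_self A s) B (mem_insert_of_mem hB) (ne_of_mem_of_not_mem hB hA).symm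
    have ih' := ih (fun B hB => hu B (mem_insert_of_mem hB))
      (fun B hB C hC => hi B (mem_insert_of_mem hB) C (mem_insert_of_mem hC))
    have hunion := card_union_add_card_inter A (s.biUnion id)
    rw [biUnion_insert, card_insert_of_notMem hA, Nat.choose_succ_succ', Nat.choose_one_right]
    simp only [id] at hunion ⊢
    nlinarith

lemma card_lt_of_lt_mul {n k t m : ℕ} {H : Finset (Finset ℕ)} (hg : OnGround n H)
    (hu : Uniform k H) (hi : AtMostIntersecting t H) (hm : n + t * m.choose 2 < m * k) :
    #H < m := by
  by_contra! hHm
  obtain ⟨s, hsH, rfl⟩ := exists_subset_card_eq hHm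
  have hcover : #(s.biUnion id) ≤ n := by
    simpa using card_le_card (biUnion_subset.2 fun A hA => hg A (hsH hA) :
      s.biUnion id ⊆ Icc 1 n)
  have := card_mul_le_card_biUnion_add s (fun A hA => hu A (hsH hA))
    (fun A hA B hB => hi A (hsH hA) B (hsH hB))
  omega

lemma exists_onGround_of_card_le {α : Type*} [Fintype α] [DecidableEq α] {n k t : ℕ}
    (hα : Fintype.card α ≤ n) (F : Finset (Finset α)) (hu : ∀ A ∈ F, #A = k)
    (hi : ∀ A ∈ F, ∀ B ∈ F, A ≠ B → #(A ∩ B) ≤ t) :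
    ∃ H, OnGround n H ∧ Uniform k H ∧ AtMostIntersecting t H ∧ #H = #F := by
  let f : α ↪ ℕ :=
    ⟨fun x => Fintype.equivFin α x + 1, fun x y h => by simpa [Fin.val_inj] using h⟩
  have hf : ∀ x, f x ∈ Icc 1 n := fun x =>
    mem_Icc.2 ⟨Nat.le_add_left 1 _, (Fintype.equivFin α x).isLt.trans_le hα⟩
  refine ⟨F.map (mapEmbedding f).toEmbedding, ?_, ?_, ?_, card_map _⟩
  · simp only [OnGround, mem_map]
    rintro _ ⟨A, -, rfl⟩
    simpa [subset_iff] using fun x _ => hf x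
  · simp only [Uniform, mem_map]
    rintro _ ⟨A, hA, rfl⟩
    simpa using hu A hA
  · simp only [AtMostIntersecting, mem_map]
    rintro _ ⟨A, hA, rfl⟩ _ ⟨B, hB, rfl⟩ hAB
    simpa [← map_inter] using hi A hA B hB (by rintro rfl; exact hAB rfl)

lemma Nat.choose_two_mul_two (m : ℕ) : m.choose 2 * 2 = m * (m - 1) := by
  cases m with
  | zero => rfl
  | succ j => simpa [mul_comm] using (Nat.add_one_mul_choose_eq j 1).symm

lemma exists_family_of_mul_le {n k t m : ℕ} (hmt : m * t < k)
    (hmk : m * k ≤ n + t * m.choose 2) :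
    ∃ H, OnGround n H ∧ Uniform k H ∧ AtMostIntersecting t H ∧ #H = m := by
  have hpred : (m - 1) * t ≤ m * t := Nat.mul_le_mul_right t (Nat.sub_le m 1)
  obtain ⟨p, rfl⟩ : ∃ p, k = p + (m - 1) * t := ⟨k - (m - 1) * t, by omega⟩
  have hp : 0 < p := by omega
  let G := SimpleGraph.completeGraph (Fin m)
  have hground : Fintype.card (Fin m × Fin p ⊕ G.edgeSet × Fin t) ≤ n := by
    have h2 := Nat.choose_two_mul_two m
    simp only [Fintype.card_sum, Fintype.card_prod, Fintype.card_fin, ← G.edgeFinset_card,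
      G, SimpleGraph.card_edgeFinset_top_eq_card_choose_two]
    nlinarith
  obtain ⟨H, hg, hu, hi, hcard⟩ := exists_onGround_of_card_le (k := p + (m - 1) * t) hground
    (univ.image (G.incidenceBlock p t))
    (by simp [G, SimpleGraph.card_incidenceBlock])
    (by
      simp only [mem_image, mem_univ, true_and]
      rintro _ ⟨v, rfl⟩ _ ⟨w, rfl⟩ hvw
      exact G.card_incidenceBlock_inter_le p t (by rintro rfl; exact hvw rfl))
  rw [card_image_of_injective _ (G.incidenceBlock_injective p t hp), card_univ,
    Fintype.card_fin] at hcard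
  exact ⟨H, hg, hu, hi, hcard⟩

lemma varpi_eq {n k t m : ℕ}
    (hex : ∃ H, OnGround n H ∧ Uniform k H ∧ AtMostIntersecting t H ∧ #H = m)
    (hle : ∀ H, OnGround n H → Uniform k H → AtMostIntersecting t H → #H ≤ m) :
    varpi n k t = m :=
  IsGreatest.csSup_eq ⟨hex, by rintro _ ⟨H, hg, hu, hi, rfl⟩; exact hle H hg hu hi⟩

lemma lt_mul_sub_iff (n k t m : ℕ) :
    (n : ℚ) < m * k - (1 / 2) * m * (m - 1) * t ↔ n + t * m.choose 2 < m * k := by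
  rw [← Nat.cast_lt (α := ℚ)]
  push_cast [Nat.cast_choose_two]
  constructor <;> intro h <;> linarith

/-- Writing `k = q t + r` with `0 ≤ r < t`, `2 t (f (q + 1)) - k (k + t) = r (t - r) ≥ 0`
for `f m = m k - m (m - 1) t / 2`. -/
lemma lt_mul_sub_at_div_add_one {n k t : ℕ} (ht : 0 < t)
    (hsmall : (n : ℚ) < (1 / 2) * k * ((k : ℚ) / t + 1)) :
    (n : ℚ) < ((k / t + 1 : ℕ) : ℚ) * k - (1 / 2) * ((k / t + 1 : ℕ) : ℚ) *
      (((k / t + 1 : ℕ) : ℚ) - 1) * t := by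
  have htQ : (0 : ℚ) < t := by exact_mod_cast ht
  have hdiv : (k : ℚ) = t * (k / t : ℕ) + (k % t : ℕ) := by
    exact_mod_cast (Nat.div_add_mod k t).symm
  have hr : ((k % t : ℕ) : ℚ) < t := by exact_mod_cast Nat.mod_lt k ht
  have hsmall' : (n : ℚ) * (2 * t) < k * (k + t) := by
    have h : (1 / 2) * k * ((k : ℚ) / t + 1) * (2 * t) = k * (k + t) := by
      field_simp
    exact h ▸ mul_lt_mul_of_pos_right hsmall (by positivity)
  push_cast
  refine lt_of_mul_lt_mul_right (hsmall'.trans_le ?_) (by positivity : (0 : ℚ) ≤ 2 * t)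
  nlinarith [mul_nonneg (Nat.cast_nonneg (k % t) : (0 : ℚ) ≤ _) (sub_nonneg.2 hr.le)]

theorem stmt4_general (n k t : ℕ) (ht : 0 < t)
    (hsmall : (n : ℚ) < (1 / 2) * k * ((k : ℚ) / t + 1)) :
    (∃ m : ℕ, 0 < m ∧ (n : ℚ) < m * k - (1 / 2) * m * (m - 1) * t) ∧
    ∀ m' : ℕ,
      (0 < m' ∧ (n : ℚ) < m' * k - (1 / 2) * m' * (m' - 1) * t ∧
        ∀ m : ℕ, 0 < m → (n : ℚ) < m * k - (1 / 2) * m * (m - 1) * t → m' ≤ m) →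
      varpi n k t = m' - 1 := by
  refine ⟨⟨k / t + 1, Nat.succ_pos _, lt_mul_sub_at_div_add_one ht hsmall⟩, ?_⟩
  rintro m' ⟨hm'pos, hm'lt, hm'min⟩
  obtain ⟨m, rfl⟩ : ∃ m, m' = m + 1 := ⟨m' - 1, by omega⟩
  rw [lt_mul_sub_iff] at hm'lt
  have hm : m * k ≤ n + t * m.choose 2 := by
    rcases Nat.eq_zero_or_pos m with rfl | hm0
    · simp
    by_contra! h
    have := hm'min m hm0 ((lt_mul_sub_iff n k t m).2 h)
    omega
  -- `f (m + 1) - f m = k - m t` for `f m = m k - t (m choose 2)`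
  have hmt : m * t < k := by
    rw [Nat.choose_succ_succ', Nat.choose_one_right] at hm'lt
    nlinarith
  rw [Nat.add_sub_cancel]
  exact varpi_eq (exists_family_of_mul_le hmt hm)
    fun H hg hu hi => Nat.lt_succ_iff.mp (card_lt_of_lt_mul hg hu hi hm'lt)

/-- Let `t ≤ k ≤ n` be positive integers with
`n < (1/2)·k·(k/t + 1)` (over ℚ). Then there is a positive integer `m` with
`n < mk − (1/2)m(m−1)t`, and for the least such `m′`, `ϖ(n,k,t) = m′ − 1`. -/
theorem stmt4 (n k t : ℕ) (hn : 0 < n) (hk : 0 < k) (ht : 0 < t)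
    (htk : t ≤ k) (hkn : k ≤ n)
    (hsmall : (n : ℚ) < (1 / 2) * k * ((k : ℚ) / t + 1)) :
    (∃ m : ℕ, 0 < m ∧ (n : ℚ) < m * k - (1 / 2) * m * (m - 1) * t) ∧
    ∀ m' : ℕ,
      (0 < m' ∧ (n : ℚ) < m' * k - (1 / 2) * m' * (m' - 1) * t ∧
        ∀ m : ℕ, 0 < m → (n : ℚ) < m * k - (1 / 2) * m * (m - 1) * t → m' ≤ m) →
      varpi n k t = m' - 1 :=
  stmt4_general n k t ht hsmall
end

section
/- Let n, k, t be positive integers with t ≤ k ≤ n and n < (1/2)·k·(k/t + 1) (as rational numbers). Then ϖ(n,k,t) = ⌊1/2 + k/t − √((1/2 + k/t)² − 2n/t)⌋, where the expression inside the floor is evaluated over the real numbers. -/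
/-!
Among `m + 1` members of a `k`-uniform family whose pairwise intersections have at most `t`
points, inclusion–exclusion truncated at pairs gives a union of at least
`(m + 1) k - C(m + 1, 2) t` points; so on `[n]` the family has at most `m` members as soon as
this exceeds `n`. Conversely, `m` such sets fit into `m k - C(m, 2) t` points: give each set
`k - (m - 1) t` private points and each pair of sets a common block of `t` points.
With `c = 1/2 + k/t` and `D = c² - 2n/t` one has `m k - C(m, 2) t ≤ n ↔ D ≤ (c - m)²`, and
the hypothesis `n < k (k/t + 1) / 2` says `√D > 1/2`; hence `m = ⌊c - √D⌋` fits while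
`m + 1` does not.
-/

open Finset

theorem card_mul_le_card_biUnion_add_choose_mul {α : Type*} [DecidableEq α] {k t : ℕ}
    (F : Finset (Finset α)) (hk : ∀ A ∈ F, #A = k)
    (ht : ∀ A ∈ F, ∀ B ∈ F, A ≠ B → #(A ∩ B) ≤ t) :
    #F * k ≤ #(F.biUnion id) + (#F).choose 2 * t := by
  induction F using Finset.induction_on with
  | empty => simp
  | @insert A F hA ih =>
    have ih := ih (fun B hB => hk B (mem_insert_of_mem hB))
      (fun B hB C hC => ht B (mem_insert_of_mem hB) C (mem_insert_of_mem hC))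
    have hinter : #(A ∩ F.biUnion id) ≤ #F * t := by
      rw [inter_biUnion]
      calc #(F.biUnion (A ∩ ·)) ≤ ∑ B ∈ F, #(A ∩ B) := card_biUnion_le
        _ ≤ ∑ _B ∈ F, t := sum_le_sum fun B hB =>
            ht A (mem_insert_self A F) B (mem_insert_of_mem hB) (ne_of_mem_of_not_mem hB hA).symm
        _ = #F * t := by rw [sum_const, smul_eq_mul]
    have hunion := card_union_add_card_inter A (F.biUnion id)
    rw [biUnion_insert, id, card_insert_of_notMem hA, Nat.choose_succ_succ', Nat.choose_one_right]
    rw [hk A (mem_insert_self A F)] at hunion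
    linarith

theorem card_le_of_add_choose_mul_lt {n k t M : ℕ} {H : Finset (Finset ℕ)} (hH : OnGround n H)
    (hk : Uniform k H) (ht : AtMostIntersecting t H)
    (hM : n + (M + 1).choose 2 * t < (M + 1) * k) : #H ≤ M := by
  by_contra! hlt
  obtain ⟨H', hH', hcard⟩ := exists_subset_card_eq (show M + 1 ≤ #H by omega)
  have hunion : #(H'.biUnion id) ≤ n := by
    calc #(H'.biUnion id) ≤ #(Icc 1 n) :=
          card_le_card (biUnion_subset.2 fun A hA => hH A (hH' hA))
      _ = n := Nat.card_Icc 1 n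
  have := card_mul_le_card_biUnion_add_choose_mul H' (fun A hA => hk A (hH' hA))
    (fun A hA B hB => ht A (hH' hA) B (hH' hB))
  rw [hcard] at this
  linarith

section PairBlocks

variable {ι : Type*} [Fintype ι] [DecidableEq ι] (p t : ℕ)

def pairBlockSet (i : ι) : Finset ((ι × Fin p) ⊕ (Sym2 ι × Fin t)) :=
  ({i} ×ˢ univ).disjSum ((⊤ : SimpleGraph ι).incidenceFinset i ×ˢ univ)

-- those of `pairBlockGround`, not all of the type.
def pairBlockGround : Finset ((ι × Fin p) ⊕ (Sym2 ι × Fin t)) :=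
  univ.disjSum ((⊤ : SimpleGraph ι).edgeFinset ×ˢ univ)

theorem card_pairBlockSet (i : ι) :
    #(pairBlockSet p t i) = p + (Fintype.card ι - 1) * t := by
  simp [pairBlockSet, SimpleGraph.card_incidenceFinset_eq_degree,
    SimpleGraph.complete_graph_degree]

theorem card_pairBlockGround :
    #(pairBlockGround p t : Finset ((ι × Fin p) ⊕ (Sym2 ι × Fin t))) =
      Fintype.card ι * p + (Fintype.card ι).choose 2 * t := by
  rw [pairBlockGround, card_disjSum, card_product,
    SimpleGraph.card_edgeFinset_top_eq_card_choose_two]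
  simp

theorem pairBlockSet_subset_pairBlockGround (i : ι) :
    pairBlockSet p t i ⊆ pairBlockGround p t :=
  disjSum_mono (subset_univ _)
    (product_subset_product_left (SimpleGraph.incidenceFinset_subset _ i))

theorem card_pairBlockSet_inter_le {i j : ι} (hij : i ≠ j) :
    #(pairBlockSet p t i ∩ pairBlockSet p t j) ≤ t := by
  calc _ ≤ #((∅ : Finset (ι × Fin p)).disjSum ({s(i, j)} ×ˢ (univ : Finset (Fin t)))) := by
        refine card_le_card fun x hx => ?_
        rcases x with ⟨a, b⟩ | ⟨e, b⟩
        · obtain ⟨rfl, rfl⟩ : i = a ∧ j = a := by simpa [pairBlockSet] using hx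
          exact absurd rfl hij
        · have hije : i ∈ e ∧ j ∈ e := by simp_all [pairBlockSet, SimpleGraph.incidenceSet]
          simp [(Sym2.mem_and_mem_iff hij).1 hije]
    _ = t := by simp

end PairBlocks

theorem Finset.exists_injOn_mapsTo_Icc {α : Type*} (S : Finset α) :
    ∃ f : α → ℕ, Set.InjOn f S ∧ ∀ x ∈ S, f x ∈ Icc 1 #S := by
  classical
  refine ⟨fun x => if h : x ∈ S then S.equivFin ⟨x, h⟩ + 1 else 0,
    fun x hx y hy hxy => ?_, fun x hx => ?_⟩
  · simpa [mem_coe.1 hx, mem_coe.1 hy, Fin.val_inj] using hxy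
  · simp only [dif_pos hx, mem_Icc]
    have := (S.equivFin ⟨x, hx⟩).is_lt
    omega

theorem exists_family_card_eq {n p t M : ℕ} (hp : 0 < p) (hn : M * p + M.choose 2 * t ≤ n) :
    ∃ H : Finset (Finset ℕ), OnGround n H ∧ Uniform (p + (M - 1) * t) H ∧
      AtMostIntersecting t H ∧ #H = M := by
  obtain ⟨f, hf, hfS⟩ := exists_injOn_mapsTo_Icc
    (pairBlockGround p t : Finset ((Fin M × Fin p) ⊕ (Sym2 (Fin M) × Fin t)))
  have hsub := pairBlockSet_subset_pairBlockGround (ι := Fin M) p t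
  set A : Fin M → Finset ℕ := fun i => (pairBlockSet p t i).image f
  have hcard (i : Fin M) : #(A i) = p + (M - 1) * t := by
    rw [card_image_of_injOn (hf.mono (coe_subset.2 (hsub i))), card_pairBlockSet,
      Fintype.card_fin]
  have hinter {i j : Fin M} (hij : i ≠ j) : #(A i ∩ A j) ≤ t := by
    rw [← image_inter_of_injOn _ _ (hf.mono (Set.union_subset (hsub i) (hsub j)))]
    exact card_image_le.trans (card_pairBlockSet_inter_le p t hij)
  have hA : Function.Injective A := fun i j hAij => by
    have hi : Sum.inl (i, ⟨0, hp⟩) ∈ pairBlockSet p t i := by simp [pairBlockSet]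
    have hfi : f (Sum.inl (i, ⟨0, hp⟩)) ∈ A j := hAij ▸ mem_image_of_mem f hi
    obtain ⟨y, hy, hyi⟩ := mem_image.1 hfi
    rw [hf (hsub j hy) (hsub i hi) hyi] at hy
    simpa [pairBlockSet, eq_comm] using hy
  refine ⟨univ.image A, ?_, ?_, ?_, ?_⟩
  · simp only [OnGround, mem_image, mem_univ, true_and, forall_exists_index,
      forall_apply_eq_imp_iff]
    intro i y hy
    obtain ⟨x, hx, rfl⟩ := mem_image.1 hy
    have := hfS x (hsub i hx)
    rw [card_pairBlockGround, Fintype.card_fin] at this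
    exact Icc_subset_Icc_right hn this
  · simpa [Uniform] using hcard
  · simp only [AtMostIntersecting, mem_image, mem_univ, true_and, forall_exists_index,
      forall_apply_eq_imp_iff]
    exact fun i j hij => hinter fun h => hij (congrArg A h)
  · rw [card_image_of_injective _ hA, card_univ, Fintype.card_fin]

theorem varpi_eq_of_bounds {n k t m : ℕ} (hmt : (m - 1) * t < k)
    (hlow : m * (k - (m - 1) * t) + m.choose 2 * t ≤ n)
    (hup : n + (m + 1).choose 2 * t < (m + 1) * k) : varpi n k t = m := by
  refine IsGreatest.csSup_eq ⟨?_, ?_⟩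
  · have := exists_family_card_eq (Nat.sub_pos_of_lt hmt) hlow
    rwa [Nat.sub_add_cancel hmt.le] at this
  · rintro _ ⟨H, hH, hk, ht, rfl⟩
    exact card_le_of_add_choose_mul_lt hH hk ht hup

theorem floor_sub_sqrt_bounds {c D : ℝ} (hc : 0 ≤ c) (hDc : D ≤ c ^ 2) (hD : 1 / 4 < D) :
    0 ≤ ⌊c - √D⌋ ∧ ⌊c - √D⌋ + 1 / 2 < c ∧ D ≤ (c - ⌊c - √D⌋) ^ 2 ∧
      (c - (⌊c - √D⌋ + 1)) ^ 2 < D := by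
  have hsq := Real.sq_sqrt (hD.le.trans' (by norm_num))
  have hsc : √D ≤ c := Real.sqrt_le_iff.2 ⟨hc, hDc⟩
  have hhalf : 1 / 2 < √D := (Real.lt_sqrt (by norm_num)).2 (by linarith)
  have hle := Int.floor_le (c - √D)
  have hlt := Int.lt_floor_add_one (c - √D)
  refine ⟨Int.floor_nonneg.2 (by linarith), by linarith, ?_, ?_⟩
  · have := pow_le_pow_left₀ (Real.sqrt_nonneg D)
      (show √D ≤ c - ⌊c - √D⌋ by linarith) 2
    linarith
  · have := sq_lt_sq' (show -√D < c - (⌊c - √D⌋ + 1) by linarith)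
      (show c - (⌊c - √D⌋ + 1) < √D by linarith)
    linarith

theorem exists_natCast_eq_floor_of_lt {n k t : ℕ} (ht : 0 < t)
    (hsmall : (n : ℝ) < 1 / 2 * k * ((k : ℝ) / t + 1)) :
    ∃ m : ℕ, (m : ℤ) = ⌊(1 / 2 + (k : ℝ) / t -
        Real.sqrt ((1 / 2 + (k : ℝ) / t) ^ 2 - 2 * n / t))⌋ ∧
      (m - 1) * t < k ∧ m * (k - (m - 1) * t) + m.choose 2 * t ≤ n ∧
      n + (m + 1).choose 2 * t < (m + 1) * k := by
  have ht' : (0 : ℝ) < t := by exact_mod_cast ht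
  have hquad (x : ℝ) :
      t * ((1 / 2 + k / t - x) ^ 2 - ((1 / 2 + (k : ℝ) / t) ^ 2 - 2 * n / t)) =
      2 * (n - (x * k - x * (x - 1) / 2 * t)) := by
    field_simp
    ring
  have hD : t * ((1 / 2 + (k : ℝ) / t) ^ 2 - 2 * n / t - 1 / 4) =
      2 * (1 / 2 * k * (k / t + 1) - n) := by
    field_simp
    ring
  obtain ⟨h0, hc, hlow, hup⟩ := floor_sub_sqrt_bounds (c := 1 / 2 + (k : ℝ) / t)
    (D := (1 / 2 + (k : ℝ) / t) ^ 2 - 2 * n / t) (by positivity)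
    (sub_le_self _ (by positivity))
    (lt_of_sub_pos (pos_of_mul_pos_right (hD ▸ by linarith) ht'.le))
  obtain ⟨m, hm⟩ := Int.eq_ofNat_of_zero_le h0
  rw [hm] at hc hlow hup
  push_cast at hc hlow hup
  have hmt : m * t < k := by
    have : (m : ℝ) * t < k := by
      rw [← lt_div_iff₀ ht']
      linarith
    exact_mod_cast this
  have hm1t : (m - 1) * t < k := (Nat.mul_le_mul_right t (Nat.sub_le m 1)).trans_lt hmt
  refine ⟨m, hm.symm, hm1t, ?_, ?_⟩
  · have hcast : ((m * (k - (m - 1) * t) + m.choose 2 * t : ℕ) : ℝ) =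
        m * k - m * (m - 1) / 2 * t := by
      rcases Nat.eq_zero_or_pos m with rfl | hm0
      · simp
      · push_cast [Nat.cast_sub hm1t.le, Nat.cast_sub hm0, Nat.cast_choose_two]
        ring
    have : ((m * (k - (m - 1) * t) + m.choose 2 * t : ℕ) : ℝ) ≤ n := by
      linarith [hquad m, mul_nonneg ht'.le (sub_nonneg.2 hlow)]
    exact_mod_cast this
  · have : ((n + (m + 1).choose 2 * t : ℕ) : ℝ) < ((m + 1) * k : ℕ) := by
      push_cast [Nat.cast_choose_two]
      linarith [hquad (m + 1), mul_neg_of_pos_of_neg ht' (sub_neg.2 hup)]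
    exact_mod_cast this

theorem stmt5_general (n k t : ℕ) (ht : 0 < t)
    (hsmall : (n : ℚ) < (1 / 2) * k * ((k : ℚ) / t + 1)) :
    (varpi n k t : ℤ) =
      ⌊(1 / 2 + (k : ℝ) / t -
        Real.sqrt ((1 / 2 + (k : ℝ) / t) ^ 2 - 2 * n / t))⌋ := by
  have hsmallR : (n : ℝ) < 1 / 2 * k * ((k : ℝ) / t + 1) := by
    simpa using (Rat.cast_lt (K := ℝ)).2 hsmall
  obtain ⟨m, hm, hmt, hlow, hup⟩ := exists_natCast_eq_floor_of_lt ht hsmallR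
  rw [varpi_eq_of_bounds hmt hlow hup, hm]

/-- Let `t ≤ k ≤ n` be positive integers with
`n < (1/2)·k·(k/t + 1)` (over ℚ). Then
`ϖ(n,k,t) = ⌊1/2 + k/t − √((1/2 + k/t)² − 2n/t)⌋`, evaluated over ℝ. -/
theorem stmt5 (n k t : ℕ) (hn : 0 < n) (hk : 0 < k) (ht : 0 < t)
    (htk : t ≤ k) (hkn : k ≤ n)
    (hsmall : (n : ℚ) < (1 / 2) * k * ((k : ℚ) / t + 1)) :
    (varpi n k t : ℤ) =
      ⌊(1 / 2 + (k : ℝ) / t -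
        Real.sqrt ((1 / 2 + (k : ℝ) / t) ^ 2 - 2 * n / t))⌋ :=
  stmt5_general n k t ht hsmall
end

section
/- Let n, k, t be positive integers with t ≤ k, t dividing k, and n = (1/2)·k·(k/t + 1) + 1. Then ϖ(n,k,t) ≤ (k/t + 1)/(1 − k/n) = ((k² + kt + 2t)/(k² − kt + 2t))·(k/t + 1), where the right-hand side is evaluated over the real numbers. -/
/-!
Double counting: if `H` has `m` members and `d x` is the number of members containing `x`,
then `∑ d x = m k` and `∑ d x ^ 2 = ∑_{A, B ∈ H} #(A ∩ B) ≤ m k + m (m - 1) t`, so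
Cauchy–Schwarz gives the Johnson-type bound `m (k² - n t) ≤ n (k - t)`. Writing `k = t s`,
the relation `2 n = k (s + 1) + 2` turns it into `m (n - k - 2) ≤ n (s - 1)`, which implies
`m (n - k) ≤ n (s + 1)` once `s + 1 ≤ n - k`, that is once `t (s - 1) ≥ 2`. In the remaining
cases `s = 1` and `(s, t) = (2, 1)` the trivial bound `m ≤ C(n, k)` suffices.
-/

open Finset

section DoubleCounting

variable {α : Type*} [DecidableEq α]

theorem sum_card_filter_mem (s : Finset α) (B : Finset (Finset α)) :
    ∑ a ∈ s, #{b ∈ B | a ∈ b} = ∑ b ∈ B, #(s ∩ b) := by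
  simp_rw [← filter_mem_eq_inter, card_eq_sum_ones, sum_filter]
  exact sum_comm

theorem sum_sq_card_filter_mem (s : Finset α) (B : Finset (Finset α)) :
    ∑ a ∈ s, #{b ∈ B | a ∈ b} ^ 2 = ∑ b ∈ B, ∑ c ∈ B, #(s ∩ (b ∩ c)) := by
  simp_rw [sq, card_filter, sum_mul_sum, ite_zero_mul_ite_zero, mul_one]
  rw [sum_comm]
  refine sum_congr rfl fun b _ => ?_
  rw [sum_comm]
  refine sum_congr rfl fun c _ => ?_
  rw [card_eq_sum_ones, ← filter_mem_eq_inter, sum_filter]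
  simp only [mem_inter]

end DoubleCounting

theorem mul_le_of_mul_sub_two_le {m n k s : ℝ} (hn : 0 ≤ n) (hd : 2 < n - k)
    (hsk : s + 1 ≤ n - k) (h : m * (n - k - 2) ≤ n * (s - 1)) :
    m * (n - k) ≤ n * (s + 1) := by
  refine le_of_mul_le_mul_right ?_ (by linarith : 0 < n - k - 2)
  nlinarith [mul_le_mul_of_nonneg_right h (by linarith : 0 ≤ n - k),
    mul_nonneg hn (sub_nonneg.2 hsk)]

section Families

variable {n k t : ℕ} {H : Finset (Finset ℕ)}

theorem card_le_choose (hg : OnGround n H) (hu : Uniform k H) : #H ≤ n.choose k := by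
  simpa using card_le_card fun A hA => mem_powersetCard.2 ⟨hg A hA, hu A hA⟩

theorem exists_card_eq_varpi (n k t : ℕ) :
    ∃ H, OnGround n H ∧ Uniform k H ∧ AtMostIntersecting t H ∧ #H = varpi n k t :=
  Nat.sSup_mem
    (s := {m | ∃ H, OnGround n H ∧ Uniform k H ∧ AtMostIntersecting t H ∧ #H = m})
    ⟨0, ∅, by simp [OnGround, Uniform, AtMostIntersecting]⟩
    ⟨n.choose k, by rintro _ ⟨H, hg, hu, -, rfl⟩; exact card_le_choose hg hu⟩

theorem sum_sum_card_inter_le (hu : Uniform k H) (hi : AtMostIntersecting t H) :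
    ∑ A ∈ H, ∑ B ∈ H, #(A ∩ B) ≤ #H * (k + t * (#H - 1)) := by
  rw [← smul_eq_mul]
  refine sum_le_card_nsmul _ _ _ fun A hA => ?_
  rw [← add_sum_erase _ _ hA, inter_self, hu A hA, ← card_erase_of_mem hA, mul_comm,
    ← smul_eq_mul]
  gcongr
  exact sum_le_card_nsmul _ _ _ fun B hB =>
    hi A hA B (mem_of_mem_erase hB) (ne_of_mem_erase hB).symm

theorem card_mul_sq_le (hg : OnGround n H) (hu : Uniform k H) (hi : AtMostIntersecting t H) :
    #H * k ^ 2 ≤ n * (k + t * (#H - 1)) := by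
  have hinter : ∀ A ∈ H, Icc 1 n ∩ A = A := fun A hA => inter_eq_right.2 (hg A hA)
  have hdeg : ∑ x ∈ Icc 1 n, #{A ∈ H | x ∈ A} = #H * k := by
    rw [sum_card_filter_mem, sum_congr rfl fun A hA => by rw [hinter A hA, hu A hA], sum_const,
      smul_eq_mul]
  have hdeg_sq : ∑ x ∈ Icc 1 n, #{A ∈ H | x ∈ A} ^ 2 ≤ #H * (k + t * (#H - 1)) := by
    rw [sum_sq_card_filter_mem]
    refine (sum_sum_card_inter_le hu hi).trans_eq' (sum_congr rfl fun A hA => ?_)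
    exact sum_congr rfl fun B _ => by rw [← inter_assoc, hinter A hA]
  have hcs := sq_sum_le_card_mul_sum_sq (s := Icc 1 n) (f := fun x => #{A ∈ H | x ∈ A})
  rw [hdeg, Nat.card_Icc, add_tsub_cancel_right] at hcs
  rcases H.eq_empty_or_nonempty with rfl | hne
  · simp
  refine Nat.le_of_mul_le_mul_left ?_ hne.card_pos
  calc #H * (#H * k ^ 2) = (#H * k) ^ 2 := by ring
    _ ≤ n * (#H * (k + t * (#H - 1))) := hcs.trans (Nat.mul_le_mul_left n hdeg_sq)
    _ = #H * (n * (k + t * (#H - 1))) := by ring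

theorem card_mul_sub_le {s : ℕ} (hg : OnGround n H) (hu : Uniform (t * s) H)
    (hi : AtMostIntersecting t H) (ht : 0 < t) (hs : 1 ≤ s)
    (hval : 2 * n = t * s * (s + 1) + 2) :
    (#H : ℝ) * (n - t * s) ≤ n * (s + 1) := by
  have hchoose := card_le_choose hg hu
  rcases lt_or_ge (t * (s - 1)) 2 with hsmall | hlarge
  · have hs2 : s ≤ 2 := by have := (Nat.le_mul_of_pos_left (s - 1) ht).trans_lt hsmall; omega
    interval_cases s
    · obtain rfl : n = t + 1 := by omega
      rw [mul_one, Nat.choose_succ_self_right] at hchoose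
      have : (#H : ℝ) ≤ t + 1 := by exact_mod_cast hchoose
      push_cast
      nlinarith
    · obtain rfl : t = 1 := by omega
      obtain rfl : n = 4 := by omega
      have : (#H : ℝ) ≤ 6 := by exact_mod_cast hchoose.trans_eq (by decide)
      norm_num
      linarith
  rcases H.eq_empty_or_nonempty with rfl | hne
  · simp only [card_empty, Nat.cast_zero, zero_mul]
    positivity
  have hjohnson := card_mul_sq_le hg hu hi
  rw [← Nat.cast_le (α := ℝ)] at hjohnson
  push_cast [Nat.cast_sub hne.card_pos] at hjohnson
  have hvalR : (2 * n : ℝ) = t * s * (s + 1) + 2 := by exact_mod_cast hval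
  have hlargeR : (2 : ℝ) ≤ t * (s - 1) := by exact_mod_cast hlarge
  have hsR : (1 : ℝ) ≤ s := by exact_mod_cast hs
  refine mul_le_of_mul_sub_two_le (Nat.cast_nonneg n) (by nlinarith) (by nlinarith) ?_
  refine le_of_mul_le_mul_left ?_ (Nat.cast_pos.2 ht)
  linear_combination hjohnson + ((#H : ℝ) * t) * hvalR

end Families

theorem div_one_sub_div_eq {k t n : ℝ} (ht : t ≠ 0) (hn : n ≠ 0) (hkn : k ≠ n)
    (h : 2 * n = k * (k / t + 1) + 2) :
    (k / t + 1) / (1 - k / n) =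
      (k ^ 2 + k * t + 2 * t) / (k ^ 2 - k * t + 2 * t) * (k / t + 1) := by
  have hnum : k ^ 2 + k * t + 2 * t = 2 * t * n := by field_simp at h; linear_combination -h
  have hden : k ^ 2 - k * t + 2 * t = 2 * t * (n - k) := by field_simp at h; linear_combination -h
  rw [hnum, hden, one_sub_div hn]
  field_simp

theorem stmt7_general (n k t : ℕ) (ht : 0 < t)
    (htk : t ≤ k) (hdvd : t ∣ k) (hval : 2 * n = k * (k / t + 1) + 2) :
    (varpi n k t : ℝ) ≤ ((k : ℝ) / t + 1) / (1 - (k : ℝ) / n) ∧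
    ((k : ℝ) / t + 1) / (1 - (k : ℝ) / n) =
      (((k : ℝ) ^ 2 + k * t + 2 * t) / ((k : ℝ) ^ 2 - k * t + 2 * t)) *
        ((k : ℝ) / t + 1) := by
  obtain ⟨s, rfl⟩ := hdvd
  rw [Nat.mul_div_cancel_left s ht] at hval
  have hs : 1 ≤ s := Nat.le_of_mul_le_mul_left (by simpa using htk) ht
  have hkn : ((t * s : ℕ) : ℝ) < n := by exact_mod_cast (by nlinarith : t * s < n)
  have hn : (0 : ℝ) < n := by exact_mod_cast (by omega : 0 < n)
  have hks : ((t * s : ℕ) : ℝ) / t = s := by push_cast; field_simp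
  refine ⟨?_, div_one_sub_div_eq (by positivity) hn.ne' hkn.ne
    (by rw [hks]; exact_mod_cast hval)⟩
  obtain ⟨H, hg, hu, hi, hH⟩ := exists_card_eq_varpi n (t * s) t
  rw [← hH, hks, one_sub_div hn.ne', div_div_eq_mul_div, le_div_iff₀ (sub_pos.2 hkn),
    mul_comm _ (n : ℝ)]
  exact_mod_cast card_mul_sub_le hg hu hi ht hs hval

/-- Let `t ≤ k` be positive integers with `t ∣ k`, and let
`n = (1/2)·k·(k/t + 1) + 1` (expressed as `2n = k·(k/t + 1) + 2`). Then
`ϖ(n,k,t) ≤ (k/t + 1)/(1 − k/n) = ((k² + kt + 2t)/(k² − kt + 2t))·(k/t + 1)`,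
the right-hand sides being evaluated over ℝ. -/
theorem stmt7 (n k t : ℕ) (hn : 0 < n) (hk : 0 < k) (ht : 0 < t)
    (htk : t ≤ k) (hdvd : t ∣ k) (hval : 2 * n = k * (k / t + 1) + 2) :
    (varpi n k t : ℝ) ≤ ((k : ℝ) / t + 1) / (1 - (k : ℝ) / n) ∧
    ((k : ℝ) / t + 1) / (1 - (k : ℝ) / n) =
      (((k : ℝ) ^ 2 + k * t + 2 * t) / ((k : ℝ) ^ 2 - k * t + 2 * t)) *
        ((k : ℝ) / t + 1) :=
  stmt7_general n k t ht htk hdvd hval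
end

section
/- Let k, t be positive integers with t < k and t dividing k, and let n = (1/2)·k·(k/t + 1) + 1. Then: ϖ(n,k,t) ≤ k/t + 4 if t = 1; ϖ(n,k,t) ≤ k/t + 5 if t ∈ {2, 3, 4}; and ϖ(n,k,t) ≤ k/t + 6 if t ≥ 5. -/
open Finset

/-- Double counting plus Cauchy–Schwarz: if `H` is a `k`-uniform, at most
`t`-intersecting family on `[n]` of size `m`, then `(mk)² ≤ n(mk + m(m-1)t)`. -/
lemma key_count (n k t : ℕ) (H : Finset (Finset ℕ))
    (hg : OnGround n H) (hu : Uniform k H) (hi : AtMostIntersecting t H) :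
    (H.card * k)^2 ≤ n * (H.card * k + H.card * (H.card - 1) * t) := by
  classical
  set S := Finset.Icc 1 n with hS
  set d : ℕ → ℕ := fun x => (H.filter (fun A => x ∈ A)).card with hd
  have hdx : ∀ x, d x = ∑ A ∈ H, if x ∈ A then 1 else 0 := by
    intro x; rw [hd]; exact Finset.card_filter _ _
  have hsum : ∑ x ∈ S, d x = H.card * k := by
    calc ∑ x ∈ S, d x = ∑ x ∈ S, ∑ A ∈ H, (if x ∈ A then 1 else 0) := by
          simp [hdx]
      _ = ∑ A ∈ H, ∑ x ∈ S, (if x ∈ A then 1 else 0) := Finset.sum_comm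
      _ = ∑ A ∈ H, (S.filter (fun x => x ∈ A)).card := by
          simp [Finset.card_filter]
      _ = ∑ A ∈ H, A.card := by
          refine Finset.sum_congr rfl fun A hA => ?_
          rw [Finset.filter_mem_eq_inter, Finset.inter_eq_right.mpr (hg A hA)]
      _ = H.card * k := by
          rw [Finset.sum_congr rfl fun A hA => hu A hA, Finset.sum_const, smul_eq_mul]
  have hsq : ∑ x ∈ S, d x ^ 2 ≤ H.card * k + H.card * (H.card - 1) * t := by
    have h1 : ∑ x ∈ S, d x ^ 2 = ∑ A ∈ H, ∑ B ∈ H, (A ∩ B).card := by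
      calc ∑ x ∈ S, d x ^ 2
          = ∑ x ∈ S, ∑ A ∈ H, ∑ B ∈ H, (if x ∈ A ∩ B then 1 else 0) := by
            refine Finset.sum_congr rfl fun x _ => ?_
            rw [hdx, sq, Finset.sum_mul_sum]
            refine Finset.sum_congr rfl fun A _ => Finset.sum_congr rfl fun B _ => ?_
            by_cases hA : x ∈ A <;> by_cases hB : x ∈ B <;> simp [hA, hB]
        _ = ∑ A ∈ H, ∑ B ∈ H, ∑ x ∈ S, (if x ∈ A ∩ B then 1 else 0) := by
            rw [Finset.sum_comm]
            exact Finset.sum_congr rfl fun A _ => Finset.sum_comm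
        _ = ∑ A ∈ H, ∑ B ∈ H, (S.filter (fun x => x ∈ A ∩ B)).card := by
            refine Finset.sum_congr rfl fun A _ => Finset.sum_congr rfl fun B _ => ?_
            exact (Finset.card_filter _ _).symm
        _ = ∑ A ∈ H, ∑ B ∈ H, (A ∩ B).card := by
            refine Finset.sum_congr rfl fun A hA => Finset.sum_congr rfl fun B hB => ?_
            rw [Finset.filter_mem_eq_inter, Finset.inter_eq_right.mpr]
            exact (Finset.inter_subset_left).trans (hg A hA)
    rw [h1]
    have h2 : ∀ A ∈ H, ∑ B ∈ H, (A ∩ B).card ≤ k + (H.card - 1) * t := by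
      intro A hA
      rw [← Finset.add_sum_erase _ _ hA]
      have : ∑ B ∈ H.erase A, (A ∩ B).card ≤ ∑ B ∈ H.erase A, t :=
        Finset.sum_le_sum fun B hB =>
          hi A hA B (Finset.mem_of_mem_erase hB) (fun h => (Finset.ne_of_mem_erase hB) h.symm)
      have h4 : ∑ B ∈ H.erase A, (A ∩ B).card ≤ (H.erase A).card * t := by
        calc ∑ B ∈ H.erase A, (A ∩ B).card ≤ ∑ _B ∈ H.erase A, t := this
          _ = (H.erase A).card * t := by rw [Finset.sum_const, smul_eq_mul]
      rw [Finset.inter_self, hu A hA, Finset.card_erase_of_mem hA] at *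
      omega
    calc ∑ A ∈ H, ∑ B ∈ H, (A ∩ B).card ≤ ∑ A ∈ H, (k + (H.card - 1) * t) :=
          Finset.sum_le_sum h2
      _ = H.card * k + H.card * (H.card - 1) * t := by
          rw [Finset.sum_const, smul_eq_mul, mul_add, mul_assoc]
  have hcs : (∑ x ∈ S, d x) ^ 2 ≤ S.card * ∑ x ∈ S, d x ^ 2 := by
    have h := sq_sum_le_card_mul_sum_sq (s := S) (f := fun x => (d x : ℤ))
    have h' : ((∑ x ∈ S, d x : ℕ) : ℤ) ^ 2 ≤ (S.card : ℤ) * ((∑ x ∈ S, d x ^ 2 : ℕ) : ℤ) := by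
      push_cast
      exact h
    exact_mod_cast h'
  have hcard : S.card = n := by rw [hS, Nat.card_Icc]; omega
  calc (H.card * k)^2 = (∑ x ∈ S, d x)^2 := by rw [hsum]
    _ ≤ S.card * ∑ x ∈ S, d x ^ 2 := hcs
    _ ≤ n * (H.card * k + H.card * (H.card - 1) * t) := by
        rw [hcard]; exact Nat.mul_le_mul_left n hsq

/-- From the counting inequality, derive `m * D ≤ (q+1) * D + 4k` in ℤ,
where `D = k² - k t - 2 t`, given `k = t q` and `2n = k(q+1)+2`. -/
lemma arith_main (n k t q m : ℤ) (hk : k = t * q) (hval : 2 * n = k * (q + 1) + 2)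
    (hm : 1 ≤ m)
    (key : (m * k)^2 ≤ n * (m * k + m * (m - 1) * t)) :
    m * (k^2 - k*t - 2*t) ≤ (q + 1) * (k^2 - k*t - 2*t) + 4*k := by
  have h1 : m * (m * k^2) ≤ m * (n*k + n*(m-1)*t) := by nlinarith [key]
  have h2 : m * k^2 ≤ n*k + n*(m-1)*t := le_of_mul_le_mul_left h1 (by linarith)
  subst hk
  have h3 : 2 * (m * (t*q)^2) ≤ (2*n) * (t*q) + (2*n) * ((m-1)*t) := by nlinarith [h2]
  rw [hval] at h3
  nlinarith [h3]

lemma arith_case (q m c D k : ℤ) (hD : 0 < D) (h4 : 4*k < (c+1)*D)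
    (hmd : m * D ≤ (q+1)*D + 4*k) : m ≤ q + 1 + c := by
  by_contra h
  push_neg at h
  nlinarith [h, hD, h4, hmd]

/-- Let `t < k` be positive integers with `t ∣ k`, and let
`n = (1/2)·k·(k/t + 1) + 1` (expressed as `2n = k·(k/t + 1) + 2`). Then
`ϖ(n,k,t) ≤ k/t + 4` if `t = 1`; `ϖ(n,k,t) ≤ k/t + 5` if `t ∈ {2,3,4}`; and
`ϖ(n,k,t) ≤ k/t + 6` if `t ≥ 5`. -/
theorem stmt8 (n k t : ℕ) (hn : 0 < n) (hk : 0 < k) (ht : 0 < t)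
    (htk : t < k) (hdvd : t ∣ k) (hval : 2 * n = k * (k / t + 1) + 2) :
    (t = 1 → varpi n k t ≤ k / t + 4) ∧
    (t = 2 ∨ t = 3 ∨ t = 4 → varpi n k t ≤ k / t + 5) ∧
    (5 ≤ t → varpi n k t ≤ k / t + 6) := by
  have hq : k = t * (k / t) := (Nat.mul_div_cancel' hdvd).symm
  have main : ∀ c : ℕ, 0 < (k:ℤ)^2 - k*t - 2*t →
      4*(k:ℤ) < ((c:ℤ)+1)*((k:ℤ)^2 - (k:ℤ)*t - 2*t) →
      varpi n k t ≤ k / t + 1 + c := by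
    intro c hD h4
    apply csSup_le'
    rintro m ⟨H, hg, hu, hi, rfl⟩
    rcases Nat.eq_zero_or_pos H.card with h0 | h1
    · exact h0 ▸ Nat.zero_le _
    · have h1' : 1 ≤ H.card := h1
      have key := key_count n k t H hg hu hi
      have keyZ : ((H.card:ℤ) * k)^2 ≤
          (n:ℤ) * ((H.card:ℤ)*k + (H.card:ℤ)*((H.card:ℤ)-1)*t) := by
        zify [h1'] at key
        exact key
      have hmd := arith_main (n:ℤ) (k:ℤ) (t:ℤ) ((k/t : ℕ):ℤ) (H.card:ℤ)
        (by exact_mod_cast hq) (by exact_mod_cast hval) (by exact_mod_cast h1') keyZ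
      have hfin := arith_case ((k/t : ℕ):ℤ) (H.card:ℤ) (c:ℤ) _ (k:ℤ) hD h4 hmd
      exact_mod_cast hfin
  have hbig : 2 ≤ t → 2 * t ≤ k := by
    intro h2t
    obtain ⟨q, hqq⟩ := hdvd
    have : 2 ≤ q := by nlinarith [hqq, htk]
    nlinarith [hqq]
  refine ⟨?_, ?_, ?_⟩
  · -- t = 1
    rintro rfl
    by_cases hk2 : k = 2
    · -- degenerate case k = 2, t = 1, n = 4 : varpi 4 2 1 ≤ 6
      subst hk2
      have hn4 : n = 4 := by omega
      subst hn4
      have : varpi 4 2 1 ≤ 6 := by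
        apply csSup_le'
        rintro m ⟨H, hg, hu, hi, rfl⟩
        have hsub : H ⊆ (Finset.Icc 1 4).powersetCard 2 := by
          intro A hA
          exact Finset.mem_powersetCard.mpr ⟨hg A hA, hu A hA⟩
        have := Finset.card_le_card hsub
        rwa [Finset.card_powersetCard, Nat.card_Icc] at this
      simpa using this
    · have hk3 : 3 ≤ k := by omega
      have hk3' : (3:ℤ) ≤ (k:ℤ) := by exact_mod_cast hk3
      have h := main 3 (by push_cast; nlinarith [hk3']) (by push_cast; nlinarith [hk3'])
      omega
  · -- t ∈ {2,3,4}
    intro htc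
    have h2t : 2 ≤ t := by omega
    have hbk := hbig h2t
    have h2t' : (2:ℤ) ≤ (t:ℤ) := by exact_mod_cast h2t
    have hbk' : 2*(t:ℤ) ≤ (k:ℤ) := by exact_mod_cast hbk
    have h := main 4 (by nlinarith [h2t', hbk']) (by push_cast; nlinarith [h2t', hbk'])
    omega
  · -- t ≥ 5
    intro ht5
    have h2t : 2 ≤ t := by omega
    have hbk := hbig h2t
    have h2t' : (2:ℤ) ≤ (t:ℤ) := by exact_mod_cast h2t
    have hbk' : 2*(t:ℤ) ≤ (k:ℤ) := by exact_mod_cast hbk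
    have h := main 4 (by nlinarith [h2t', hbk']) (by push_cast; nlinarith [h2t', hbk'])
    omega
end

section
/- Let n, k, t be positive integers with t ≤ k ≤ n, and let 𝓗 ⊆ 2^[n] be an at most t-intersecting, k-uniform family with |𝓗| = m. Set r = km − n·⌊km/n⌋. Then (n − r)·⌊km/n⌋² + r·⌈km/n⌉² ≤ (k − t)m + tm². -/
open Finset

lemma nonneg_mul_pred (z : ℤ) : 0 ≤ z * (z - 1) := by
  rcases le_or_gt 1 z with h | h
  · nlinarith
  · have hz : z ≤ 0 := by omega
    nlinarith

/-- Let `t ≤ k ≤ n` be positive integers and `𝓗 ⊆ 2^[n]` an at most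
`t`-intersecting, `k`-uniform family with `|𝓗| = m`. With `r = km − n·⌊km/n⌋`,
`(n − r)·⌊km/n⌋² + r·⌈km/n⌉² ≤ (k − t)m + tm²`. -/
theorem stmt9 (n k t m : ℕ) (hn : 0 < n) (hk : 0 < k) (ht : 0 < t)
    (htk : t ≤ k) (hkn : k ≤ n)
    (H : Finset (Finset ℕ)) (hg : OnGround n H) (hu : Uniform k H)
    (hi : AtMostIntersecting t H) (hcard : H.card = m) :
    (n - (k * m - n * (k * m / n))) * (k * m / n) ^ 2 +
      (k * m - n * (k * m / n)) * ((k * m + n - 1) / n) ^ 2 ≤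
    (k - t) * m + t * m ^ 2 := by
  classical
  rcases Nat.eq_zero_or_pos m with hm0 | hm1
  · subst hm0
    simp
  set d : ℕ → ℕ := fun x => (H.filter (fun A => x ∈ A)).card with hd
  have hcardIcc : (Icc 1 n).card = n := by simp
  -- sum of degrees
  have hsum : ∑ x ∈ Icc 1 n, d x = k * m := by
    have h1 : ∑ x ∈ Icc 1 n, d x
        = ∑ A ∈ H, ((Icc 1 n).filter (fun x => x ∈ A)).card := by
      simp only [hd, Finset.card_filter]
      exact Finset.sum_comm
    rw [h1]
    have h2 : ∀ A ∈ H, ((Icc 1 n).filter (fun x => x ∈ A)).card = k := by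
      intro A hA
      rw [Finset.filter_mem_eq_inter, Finset.inter_eq_right.mpr (hg A hA)]
      exact hu A hA
    rw [Finset.sum_congr rfl h2, Finset.sum_const, hcard, smul_eq_mul, mul_comm]
  -- sum of squares of degrees
  have hsq : ∑ x ∈ Icc 1 n, d x ^ 2 = ∑ A ∈ H, ∑ B ∈ H, (A ∩ B).card := by
    have h1 : ∀ x, d x ^ 2
        = ∑ A ∈ H, ∑ B ∈ H, (if x ∈ A ∩ B then 1 else 0) := by
      intro x
      simp only [hd, Finset.card_filter, sq, Finset.sum_mul_sum]
      refine Finset.sum_congr rfl fun A _ => Finset.sum_congr rfl fun B _ => ?_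
      by_cases hA : x ∈ A <;> by_cases hB : x ∈ B <;> simp [hA, hB]
    simp only [h1]
    rw [Finset.sum_comm]
    refine Finset.sum_congr rfl fun A hA => ?_
    rw [Finset.sum_comm]
    refine Finset.sum_congr rfl fun B _ => ?_
    rw [← Finset.card_filter, Finset.filter_mem_eq_inter,
      Finset.inter_eq_right.mpr (Finset.inter_subset_left.trans (hg A hA))]
  -- upper bound on sum of squares
  have hN : ∑ x ∈ Icc 1 n, d x ^ 2 ≤ m * (k + (m - 1) * t) := by
    rw [hsq]
    have h2 : ∀ A ∈ H, ∑ B ∈ H, (A ∩ B).card ≤ k + (m - 1) * t := by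
      intro A hA
      rw [← Finset.add_sum_erase _ _ hA, Finset.inter_self, hu A hA]
      have herase : ∑ B ∈ H.erase A, (A ∩ B).card ≤ (m - 1) * t := by
        have := Finset.sum_le_card_nsmul (H.erase A) (fun B => (A ∩ B).card) t
          (fun B hB => hi A hA B (Finset.mem_erase.mp hB).2
            (Finset.mem_erase.mp hB).1.symm)
        simpa [Finset.card_erase_of_mem hA, hcard] using this
      omega
    have := Finset.sum_le_card_nsmul H (fun A => ∑ B ∈ H, (A ∩ B).card)
      (k + (m - 1) * t) h2
    simpa [hcard] using this
  -- arithmetic setup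
  set q := k * m / n with hq
  set r := k * m % n with hr
  have hqr : n * q + r = k * m := Nat.div_add_mod (k * m) n
  have hrn : r < n := Nat.mod_lt _ hn
  have hsub : k * m - n * q = r := by omega
  rw [hsub]
  -- cast facts
  have hS : ∑ x ∈ Icc 1 n, (d x : ℤ) = (k : ℤ) * m := by
    have := congrArg (Nat.cast : ℕ → ℤ) hsum
    push_cast at this
    exact this
  have hkeyx : ∀ x ∈ Icc 1 n,
      (q : ℤ) ^ 2 + (2 * q + 1) * ((d x : ℤ) - q) ≤ (d x : ℤ) ^ 2 := by
    intro x _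
    have := nonneg_mul_pred ((d x : ℤ) - q)
    nlinarith [this]
  have e1 : ∑ x ∈ Icc 1 n, ((q : ℤ) ^ 2 + (2 * q + 1) * ((d x : ℤ) - q))
      = (n : ℤ) * q ^ 2 + (2 * q + 1) * ((k : ℤ) * m - n * q) := by
    rw [Finset.sum_add_distrib, Finset.sum_const, hcardIcc, ← Finset.mul_sum,
      Finset.sum_sub_distrib, Finset.sum_const, hcardIcc, hS]
    push_cast
    ring
  have conv : (n : ℤ) * q ^ 2 + (2 * q + 1) * ((k : ℤ) * m - n * q)
      ≤ ∑ x ∈ Icc 1 n, (d x : ℤ) ^ 2 := by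
    rw [← e1]
    exact Finset.sum_le_sum hkeyx
  have hZ : ∑ x ∈ Icc 1 n, (d x : ℤ) ^ 2
      ≤ (m : ℤ) * ((k : ℤ) + ((m : ℤ) - 1) * t) := by
    have := hN
    zify [hm1] at this
    exact this
  have hkm : (k : ℤ) * m - n * q = (r : ℤ) := by
    have := congrArg (Nat.cast : ℕ → ℤ) hqr
    push_cast at this
    linarith
  have rhs_eq : ((k : ℤ) - t) * m + (t : ℤ) * (m : ℤ) ^ 2
      = (m : ℤ) * ((k : ℤ) + ((m : ℤ) - 1) * t) := by ring
  rcases Nat.eq_zero_or_pos r with hr0 | hr1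
  · rw [hr0]
    simp only [Nat.sub_zero, Nat.zero_mul, Nat.add_zero, zero_mul, add_zero]
    zify [htk]
    have hkm0 : (k : ℤ) * m - n * q = 0 := by rw [hkm, hr0]; norm_num
    have h0 : (2 * (q : ℤ) + 1) * ((k : ℤ) * m - n * q) = 0 := by
      rw [hkm0]; ring
    linarith [conv, hZ, h0, rhs_eq]
  · have hc : (k * m + n - 1) / n = q + 1 := by
      have hnq : n * (q + 1) = n * q + n := by ring
      have heq : k * m + n - 1 = n * (q + 1) + (r - 1) := by omega
      rw [heq, Nat.mul_add_div hn, Nat.div_eq_of_lt (by omega)]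
    rw [hc]
    zify [htk, hrn.le]
    have lhs_eq : ((n : ℤ) - r) * (q : ℤ) ^ 2 + (r : ℤ) * ((q : ℤ) + 1) ^ 2
        = (n : ℤ) * q ^ 2 + (2 * q + 1) * ((k : ℤ) * m - n * q) := by
      rw [hkm]; ring
    linarith [conv, hZ, lhs_eq, rhs_eq]
end

section
/- Let t ≤ k ≤ n be positive integers. If a Steiner system S(t,k,n) = 𝓢 exists, then the binomial coefficient C(k−i, t−i) divides C(n−i, t−i) for every integer i with 0 ≤ i ≤ t, and the number of blocks satisfies |𝓢| = C(n,t)/C(k,t). -/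
open Finset

/-- A Steiner system `S(t,k,n)`: a family of `k`-element subsets of `[n]` such
that every `t`-element subset of `[n]` lies in exactly one block. -/
def IsSteinerSystem (t k n : ℕ) (S : Finset (Finset ℕ)) : Prop :=
  OnGround n S ∧ Uniform k S ∧
  ∀ T : Finset ℕ, T ⊆ Finset.Icc 1 n → T.card = t → ∃! A, A ∈ S ∧ T ⊆ A

lemma aux_count (t : ℕ) (I A : Finset ℕ) (hIA : I ⊆ A) (hit : I.card ≤ t) :
    ((A.powersetCard t).filter (fun T => I ⊆ T)).card
      = Nat.choose (A.card - I.card) (t - I.card) := by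
  rw [← Finset.card_sdiff_of_subset hIA, ← Finset.card_powersetCard]
  apply Finset.card_bij (fun T _ => T \ I)
  · intro T hT
    simp only [Finset.mem_filter, Finset.mem_powersetCard] at hT ⊢
    obtain ⟨⟨hTA, hTc⟩, hIT⟩ := hT
    exact ⟨sdiff_subset_sdiff hTA le_rfl, by rw [Finset.card_sdiff_of_subset hIT, hTc]⟩
  · intro T₁ h₁ T₂ h₂ h
    simp only [Finset.mem_filter, Finset.mem_powersetCard] at h₁ h₂
    have := congrArg (· ∪ I) h
    simpa [Finset.sdiff_union_of_subset h₁.2, Finset.sdiff_union_of_subset h₂.2] using this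
  · intro T' hT'
    simp only [Finset.mem_powersetCard] at hT'
    obtain ⟨hT'A, hT'c⟩ := hT'
    have hdisj : Disjoint T' I := Finset.disjoint_of_subset_left hT'A (Finset.sdiff_disjoint)
    refine ⟨T' ∪ I, ?_, ?_⟩
    · simp only [Finset.mem_filter, Finset.mem_powersetCard]
      refine ⟨⟨Finset.union_subset (hT'A.trans (Finset.sdiff_subset)) hIA, ?_⟩, Finset.subset_union_right⟩
      rw [Finset.card_union_of_disjoint hdisj, hT'c]
      omega
    · rw [Finset.union_sdiff_cancel_right hdisj]

lemma key_count_s10 (n k t : ℕ) (S : Finset (Finset ℕ)) (hS : IsSteinerSystem t k n S)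
    (I : Finset ℕ) (hIn : I ⊆ Finset.Icc 1 n) (hit : I.card ≤ t) :
    (S.filter (fun A => I ⊆ A)).card * Nat.choose (k - I.card) (t - I.card)
      = Nat.choose (n - I.card) (t - I.card) := by
  obtain ⟨hground, huniform, hsteiner⟩ := hS
  have hbu : ((Finset.Icc 1 n).powersetCard t).filter (fun T => I ⊆ T)
      = (S.filter (fun A => I ⊆ A)).biUnion
        (fun A => (A.powersetCard t).filter (fun T => I ⊆ T)) := by
    ext T
    simp only [Finset.mem_filter, Finset.mem_powersetCard, Finset.mem_biUnion]
    constructor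
    · rintro ⟨⟨hTn, hTc⟩, hIT⟩
      obtain ⟨A, ⟨hAS, hTA⟩, -⟩ := hsteiner T hTn hTc
      exact ⟨A, ⟨hAS, hIT.trans hTA⟩, ⟨hTA, hTc⟩, hIT⟩
    · rintro ⟨A, ⟨hAS, -⟩, ⟨hTA, hTc⟩, hIT⟩
      exact ⟨⟨hTA.trans (hground A hAS), hTc⟩, hIT⟩
  have hdisj : ∀ A ∈ S.filter (fun A => I ⊆ A), ∀ B ∈ S.filter (fun A => I ⊆ A), A ≠ B →
      Disjoint ((A.powersetCard t).filter (fun T => I ⊆ T))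
               ((B.powersetCard t).filter (fun T => I ⊆ T)) := by
    intro A hA B hB hAB
    simp only [Finset.mem_filter] at hA hB
    rw [Finset.disjoint_left]
    intro T hTA hTB
    simp only [Finset.mem_filter, Finset.mem_powersetCard] at hTA hTB
    obtain ⟨A', -, hu⟩ := hsteiner T (hTA.1.1.trans (hground A hA.1)) hTA.1.2
    exact hAB ((hu A ⟨hA.1, hTA.1.1⟩).trans (hu B ⟨hB.1, hTB.1.1⟩).symm)
  have h1 := congrArg Finset.card hbu
  rw [Finset.card_biUnion hdisj] at h1
  rw [aux_count t I (Finset.Icc 1 n) hIn hit, Nat.card_Icc] at h1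
  simp only [Nat.add_sub_cancel] at h1
  have h2 : ∀ A ∈ S.filter (fun A => I ⊆ A),
      ((A.powersetCard t).filter (fun T => I ⊆ T)).card
        = Nat.choose (k - I.card) (t - I.card) := by
    intro A hA
    simp only [Finset.mem_filter] at hA
    rw [aux_count t I A hA.2 hit, huniform A hA.1]
  rw [Finset.sum_congr rfl h2, Finset.sum_const, smul_eq_mul] at h1
  exact h1.symm

/-- If a Steiner system `S(t,k,n)` exists (for positive integers
`t ≤ k ≤ n`), then `C(k−i, t−i) ∣ C(n−i, t−i)` for all `0 ≤ i ≤ t`, and the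
number of blocks equals `C(n,t)/C(k,t)` (i.e. `|𝓢| · C(k,t) = C(n,t)`). -/
theorem stmt10 (n k t : ℕ) (hn : 0 < n) (hk : 0 < k) (ht : 0 < t)
    (htk : t ≤ k) (hkn : k ≤ n)
    (S : Finset (Finset ℕ)) (hS : IsSteinerSystem t k n S) :
    (∀ i : ℕ, i ≤ t → Nat.choose (k - i) (t - i) ∣ Nat.choose (n - i) (t - i)) ∧
    S.card * Nat.choose k t = Nat.choose n t := by
  constructor
  · intro i hi
    have hIcard : (Finset.Icc 1 i).card = i := by rw [Nat.card_Icc]; omega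
    have hIn : Finset.Icc 1 i ⊆ Finset.Icc 1 n := Finset.Icc_subset_Icc le_rfl (by omega)
    have := key_count_s10 n k t S hS (Finset.Icc 1 i) hIn (by omega)
    rw [hIcard] at this
    exact Dvd.intro_left _ this
  · have := key_count_s10 n k t S hS ∅ (Finset.empty_subset _) (by simp)
    simpa using this
end

section
/- Let k, t be positive integers with t < k − 1, and let C be a real number with 0 < C < 1. Then for all sufficiently large N there exists a maximally cover-free, at most t-intersecting, k-uniform family 𝓗 ⊆ 2^[N] with |𝓗| ≥ C·N. -/
open Finset

/-- encoding: private point of set `(β,i,j)` -/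
def privE (L p β i j : ℕ) : ℕ := β * L + (i * p + j) + 1

/-- encoding: core point `(x, r)` in block `β` -/
def coreE (L p β x r : ℕ) : ℕ := β * L + (p * p + (x * p + r)) + 1

/-- the set indexed by `(β, i, j)` -/
def blockSet (L p k β i j : ℕ) : Finset ℕ :=
  insert (privE L p β i j)
    ((Finset.range (k - 1)).image fun x => coreE L p β x ((i + j * x) % p))

lemma decodeL {L β β' s s' : ℕ} (hs : s < L) (hs' : s' < L)
    (h : β * L + s = β' * L + s') : β = β' ∧ s = s' := by
  have hL : 0 < L := Nat.pos_of_ne_zero (by rintro rfl; omega)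
  have hb : β = β' := by
    have h2 : (β * L + s) / L = (β' * L + s') / L := by rw [h]
    rw [mul_comm β L, mul_comm β' L, Nat.mul_add_div hL, Nat.mul_add_div hL,
      Nat.div_eq_of_lt hs, Nat.div_eq_of_lt hs'] at h2
    simpa using h2
  subst hb
  exact ⟨rfl, Nat.add_left_cancel h⟩

lemma sPriv_lt {p i j : ℕ} (hi : i < p) (hj : j < p) : i * p + j < p * p := by
  calc i * p + j < i * p + p := Nat.add_lt_add_left hj _
    _ = (i + 1) * p := by ring
    _ ≤ p * p := Nat.mul_le_mul_right p hi

lemma sCore_lt {p k x r : ℕ} (hx : x < k - 1) (hr : r < p) :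
    p * p + (x * p + r) < p * p + (k - 1) * p := by
  have h1 : x * p + r < (x + 1) * p := by
    rw [add_mul, one_mul]; exact Nat.add_lt_add_left hr _
  have h2 : (x + 1) * p ≤ (k - 1) * p := Nat.mul_le_mul_right p (by omega)
  exact Nat.add_lt_add_left (lt_of_lt_of_le h1 h2) _

section Decode
variable {L p k β β' i j i' j' x x' r r' : ℕ}

lemma privE_eq_privE (hL : L = p * p + (k - 1) * p) (hk3 : 3 ≤ k) (hkp : k ≤ p)
    (hi : i < p) (hj : j < p) (hi' : i' < p) (hj' : j' < p)
    (h : privE L p β i j = privE L p β' i' j') : β = β' ∧ i = i' ∧ j = j' := by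
  have hs : i * p + j < L := by
    rw [hL]; exact lt_of_lt_of_le (sPriv_lt hi hj) (Nat.le_add_right _ _)
  have hs' : i' * p + j' < L := by
    rw [hL]; exact lt_of_lt_of_le (sPriv_lt hi' hj') (Nat.le_add_right _ _)
  have h0 : β * L + (i * p + j) = β' * L + (i' * p + j') := by
    have := h; unfold privE at this; omega
  obtain ⟨hb, hs2⟩ := decodeL hs hs' h0
  obtain ⟨hii, hjj⟩ := decodeL hj hj' hs2
  exact ⟨hb, hii, hjj⟩

lemma privE_ne_coreE (hL : L = p * p + (k - 1) * p)
    (hi : i < p) (hj : j < p) (hx : x < k - 1) (hr : r < p) :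
    privE L p β i j ≠ coreE L p β' x r := by
  intro h
  have hs : i * p + j < L := by
    rw [hL]; exact lt_of_lt_of_le (sPriv_lt hi hj) (Nat.le_add_right _ _)
  have hs' : p * p + (x * p + r) < L := by rw [hL]; exact sCore_lt hx hr
  have h0 : β * L + (i * p + j) = β' * L + (p * p + (x * p + r)) := by
    have := h; unfold privE coreE at this; omega
  obtain ⟨_, hs2⟩ := decodeL hs hs' h0
  have := sPriv_lt hi hj
  omega

lemma coreE_eq_coreE (hL : L = p * p + (k - 1) * p)
    (hx : x < k - 1) (hr : r < p) (hx' : x' < k - 1) (hr' : r' < p)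
    (h : coreE L p β x r = coreE L p β' x' r') : β = β' ∧ x = x' ∧ r = r' := by
  have hs : p * p + (x * p + r) < L := by rw [hL]; exact sCore_lt hx hr
  have hs' : p * p + (x' * p + r') < L := by rw [hL]; exact sCore_lt hx' hr'
  have h0 : β * L + (p * p + (x * p + r)) = β' * L + (p * p + (x' * p + r')) := by
    have := h; unfold coreE at this; omega
  obtain ⟨hb, hs2⟩ := decodeL hs hs' h0
  have hs3 : x * p + r = x' * p + r' := by omega
  obtain ⟨hxx, hrr⟩ := decodeL hr hr' hs3
  exact ⟨hb, hxx, hrr⟩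

lemma mem_blockSet_iff {a : ℕ} :
    a ∈ blockSet L p k β i j ↔
      a = privE L p β i j ∨ ∃ x, x < k - 1 ∧ a = coreE L p β x ((i + j * x) % p) := by
  simp [blockSet, mem_insert, Finset.mem_image, Finset.mem_range, eq_comm]

lemma elt_decomp (hL : L = p * p + (k - 1) * p) (hp : 0 < p)
    (hi : i < p) (hj : j < p) {a : ℕ} (ha : a ∈ blockSet L p k β i j) :
    ∃ s, s < L ∧ a = β * L + s + 1 := by
  rcases mem_blockSet_iff.mp ha with h | ⟨x, hx, h⟩
  · exact ⟨i * p + j, by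
      rw [hL]; exact lt_of_lt_of_le (sPriv_lt hi hj) (Nat.le_add_right _ _), h⟩
  · exact ⟨p * p + (x * p + (i + j * x) % p), by
      rw [hL]; exact sCore_lt hx (Nat.mod_lt _ hp), h⟩

lemma card_blockSet (hL : L = p * p + (k - 1) * p) (hk3 : 3 ≤ k) (hkp : k ≤ p)
    (hi : i < p) (hj : j < p) : (blockSet L p k β i j).card = k := by
  have hp : 0 < p := by omega
  have hinj : Set.InjOn (fun x => coreE L p β x ((i + j * x) % p)) (Finset.range (k - 1)) := by
    intro a ha b hb hab
    simp only [Finset.coe_range, Set.mem_Iio] at ha hb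
    exact (coreE_eq_coreE hL ha (Nat.mod_lt _ hp) hb (Nat.mod_lt _ hp) hab).2.1
  have hnotmem : privE L p β i j ∉
      (Finset.range (k - 1)).image fun x => coreE L p β x ((i + j * x) % p) := by
    simp only [Finset.mem_image, Finset.mem_range, not_exists]
    rintro x ⟨hx, hxe⟩
    exact privE_ne_coreE hL hi hj hx (Nat.mod_lt _ hp) hxe.symm
  rw [blockSet, Finset.card_insert_of_notMem hnotmem, Finset.card_image_of_injOn hinj,
    Finset.card_range]
  omega

lemma priv_mem_blockSet_decode (hL : L = p * p + (k - 1) * p)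
    (hi : i < p) (hj : j < p) (hi' : i' < p) (hj' : j' < p) (hk3 : 3 ≤ k) (hkp : k ≤ p)
    (h : privE L p β i j ∈ blockSet L p k β' i' j') : β = β' ∧ i = i' ∧ j = j' := by
  have hp : 0 < p := by omega
  rcases mem_blockSet_iff.mp h with h | ⟨x, hx, h⟩
  · exact privE_eq_privE hL hk3 hkp hi hj hi' hj' h
  · exact absurd h (privE_ne_coreE hL hi hj hx (Nat.mod_lt _ hp))

lemma blockSet_inj (hL : L = p * p + (k - 1) * p) (hk3 : 3 ≤ k) (hkp : k ≤ p)
    (hi : i < p) (hj : j < p) (hi' : i' < p) (hj' : j' < p)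
    (h : blockSet L p k β i j = blockSet L p k β' i' j') : β = β' ∧ i = i' ∧ j = j' := by
  have : privE L p β i j ∈ blockSet L p k β' i' j' := by
    rw [← h]; exact Finset.mem_insert_self _ _
  exact priv_mem_blockSet_decode hL hi hj hi' hj' hk3 hkp this

lemma slope_unique {x₁ x₂ : ℕ} (hp : p.Prime) (hi : i < p) (hj : j < p) (hi' : i' < p)
    (hj' : j' < p) (hne : ¬(i = i' ∧ j = j')) (hx₁ : x₁ < p) (hx₂ : x₂ < p)
    (h₁ : (i + j * x₁) % p = (i' + j' * x₁) % p)
    (h₂ : (i + j * x₂) % p = (i' + j' * x₂) % p) : x₁ = x₂ := by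
  haveI := Fact.mk hp
  have cast_eq : ∀ {a b : ℕ}, a < p → b < p → ((a : ZMod p) = (b : ZMod p)) → a = b := by
    intro a b ha hb h
    have := (ZMod.natCast_eq_natCast_iff a b p).mp h
    simpa [Nat.ModEq, Nat.mod_eq_of_lt ha, Nat.mod_eq_of_lt hb] using this
  have e₁ : (i : ZMod p) + j * x₁ = (i' : ZMod p) + j' * x₁ := by
    have := (ZMod.natCast_eq_natCast_iff (i + j * x₁) (i' + j' * x₁) p).mpr h₁
    push_cast at this; exact this
  have e₂ : (i : ZMod p) + j * x₂ = (i' : ZMod p) + j' * x₂ := by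
    have := (ZMod.natCast_eq_natCast_iff (i + j * x₂) (i' + j' * x₂) p).mpr h₂
    push_cast at this; exact this
  by_cases hjj : (j : ZMod p) = (j' : ZMod p)
  · have hjn : j = j' := cast_eq hj hj' hjj
    subst hjn
    have : (i : ZMod p) = (i' : ZMod p) := by
      have := e₁; rw [hjj] at this; exact add_right_cancel this
    exact absurd ⟨cast_eq hi hi' this, rfl⟩ hne
  · have key : ((j : ZMod p) - j') * ((x₁ : ZMod p) - x₂) = 0 := by
      linear_combination e₁ - e₂
    rcases mul_eq_zero.mp key with h | h
    · exact absurd (sub_eq_zero.mp h) hjj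
    · exact cast_eq hx₁ hx₂ (sub_eq_zero.mp h)

lemma inter_card_le_one (hL : L = p * p + (k - 1) * p) (hk3 : 3 ≤ k) (hkp : k ≤ p)
    (hp : p.Prime) (hi : i < p) (hj : j < p) (hi' : i' < p) (hj' : j' < p)
    (hne : ¬(β = β' ∧ i = i' ∧ j = j')) :
    ((blockSet L p k β i j) ∩ (blockSet L p k β' i' j')).card ≤ 1 := by
  have hp0 : 0 < p := hp.pos
  by_cases hbb : β = β'
  · subst hbb
    have hne' : ¬(i = i' ∧ j = j') := fun ⟨h1, h2⟩ => hne ⟨rfl, h1, h2⟩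
    apply Finset.card_le_one.mpr
    intro a ha c hc
    rw [Finset.mem_inter] at ha hc
    -- a is a core point of both
    have decompA : ∀ {e : ℕ}, e ∈ blockSet L p k β i j → e ∈ blockSet L p k β i' j' →
        ∃ x, x < k - 1 ∧ e = coreE L p β x ((i + j * x) % p) ∧
          (i + j * x) % p = (i' + j' * x) % p := by
      intro e he he'
      rcases mem_blockSet_iff.mp he with h | ⟨x, hx, h⟩
      · subst h
        obtain ⟨_, h1, h2⟩ := priv_mem_blockSet_decode hL hi hj hi' hj' hk3 hkp he'
        exact absurd ⟨h1, h2⟩ hne'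
      · rcases mem_blockSet_iff.mp he' with h' | ⟨x', hx', h'⟩
        · rw [h] at h'
          exact absurd h'.symm (privE_ne_coreE hL hi' hj' hx (Nat.mod_lt _ hp0))
        · rw [h] at h'
          obtain ⟨_, hxx, hrr⟩ :=
            coreE_eq_coreE hL hx (Nat.mod_lt _ hp0) hx' (Nat.mod_lt _ hp0) h'
          subst hxx
          exact ⟨x, hx, h, hrr⟩
    obtain ⟨x₁, hx₁, hae, hmod₁⟩ := decompA ha.1 ha.2
    obtain ⟨x₂, hx₂, hce, hmod₂⟩ := decompA hc.1 hc.2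
    have : x₁ = x₂ :=
      slope_unique hp hi hj hi' hj' hne' (by omega) (by omega) hmod₁ hmod₂
    rw [hae, hce, this]
  · -- different blocks: intersection empty
    have : (blockSet L p k β i j) ∩ (blockSet L p k β' i' j') = ∅ := by
      rw [Finset.eq_empty_iff_forall_notMem]
      intro a ha
      rw [Finset.mem_inter] at ha
      obtain ⟨s, hs, he⟩ := elt_decomp hL hp0 hi hj ha.1
      obtain ⟨s', hs', he'⟩ := elt_decomp hL hp0 hi' hj' ha.2
      exact hbb (decodeL hs hs' (by omega)).1
    rw [this]; simp

end Decode

/-- the full family: `b` disjoint blocks of `p²` sets each -/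
def fam (L p k b : ℕ) : Finset (Finset ℕ) :=
  ((Finset.range b) ×ˢ (Finset.range p) ×ˢ (Finset.range p)).image
    fun q => blockSet L p k q.1 q.2.1 q.2.2

lemma mem_fam_iff {L p k b : ℕ} {A : Finset ℕ} :
    A ∈ fam L p k b ↔ ∃ β i j, β < b ∧ i < p ∧ j < p ∧ A = blockSet L p k β i j := by
  simp only [fam, Finset.mem_image, Finset.mem_product, Finset.mem_range, Prod.exists]
  constructor
  · rintro ⟨β, i, j, ⟨hb, hi, hj⟩, h⟩; exact ⟨β, i, j, hb, hi, hj, h.symm⟩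
  · rintro ⟨β, i, j, hb, hi, hj, h⟩; exact ⟨β, i, j, ⟨hb, hi, hj⟩, h.symm⟩

lemma card_fam {L p k b : ℕ} (hL : L = p * p + (k - 1) * p) (hk3 : 3 ≤ k) (hkp : k ≤ p) :
    (fam L p k b).card = b * (p * p) := by
  rw [fam, Finset.card_image_of_injOn]
  · simp [Finset.card_product, mul_assoc]
  · rintro ⟨β, i, j⟩ h ⟨β', i', j'⟩ h' he
    simp only [Finset.coe_product, Set.mem_prod, Finset.coe_range, Set.mem_Iio] at h h'
    obtain ⟨h1, h2, h3⟩ := blockSet_inj hL hk3 hkp h.2.1 h.2.2 h'.2.1 h'.2.2 he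
    simp_all

lemma blockSet_subset {L p k β i j b N : ℕ} (hL : L = p * p + (k - 1) * p) (hp : 0 < p)
    (hβ : β < b) (hi : i < p) (hj : j < p) (hbN : b * L ≤ N) :
    blockSet L p k β i j ⊆ Finset.Icc 1 N := by
  intro a ha
  obtain ⟨s, hs, he⟩ := elt_decomp hL hp hi hj ha
  rw [Finset.mem_Icc]
  constructor
  · omega
  · have h1 : β * L + s + 1 ≤ (β + 1) * L := by rw [add_mul, one_mul]; omega
    have h2 : (β + 1) * L ≤ b * L := Nat.mul_le_mul_right L (by omega)
    omega

theorem stmt13' (k t : ℕ) (hk : 0 < k) (ht : 0 < t) (htk : t < k - 1)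
    (C : ℝ) (hC0 : 0 < C) (hC1 : C < 1) :
    ∃ N₀ : ℕ, ∀ N : ℕ, N₀ ≤ N →
      ∃ H : Finset (Finset ℕ), (∀ A ∈ H, A ⊆ Finset.Icc 1 N) ∧ (∀ A ∈ H, A.card = k) ∧
        (∀ A ∈ H, ∀ B ∈ H, A ≠ B → (A ∩ B).card ≤ t) ∧
        (∀ A ∈ H, ¬ A ⊆ (H.erase A).biUnion id) ∧ C * (N : ℝ) ≤ H.card := by
  have hk3 : 3 ≤ k := by omega
  obtain ⟨p, hpM, hp⟩ :=
    Nat.exists_infinite_primes (max k (⌈C * ((k : ℝ) - 1) / (1 - C)⌉₊ + 1))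
  have hkp : k ≤ p := le_trans (le_max_left _ _) hpM
  have hp0 : 0 < p := hp.pos
  set L := p * p + (k - 1) * p with hLdef
  have hL0 : 0 < L := by
    have := Nat.mul_pos hp0 hp0; omega
  have hC1' : (0 : ℝ) < 1 - C := by linarith
  have hpC : C * ((k : ℝ) - 1) / (1 - C) < (p : ℝ) := by
    have h1 : (⌈C * ((k : ℝ) - 1) / (1 - C)⌉₊ + 1 : ℕ) ≤ p := le_trans (le_max_right _ _) hpM
    have h2 := Nat.le_ceil (C * ((k : ℝ) - 1) / (1 - C))
    have h3 : ((⌈C * ((k : ℝ) - 1) / (1 - C)⌉₊ : ℝ) + 1) ≤ (p : ℝ) := by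
      exact_mod_cast h1
    linarith
  have hLcast : (L : ℝ) = (p : ℝ) * p + ((k : ℝ) - 1) * p := by
    rw [hLdef]
    push_cast [Nat.cast_sub (by omega : 1 ≤ k)]
    ring
  have hkey : C * (L : ℝ) < (p : ℝ) * p := by
    have h3 : C * ((k : ℝ) - 1) < (p : ℝ) * (1 - C) := by
      rw [div_lt_iff₀ hC1'] at hpC; linarith
    have hpr : (0 : ℝ) < p := by exact_mod_cast hp0
    nlinarith
  set ε : ℝ := (p : ℝ) * p - C * L with hεdef
  have hε : 0 < ε := by rw [hεdef]; linarith
  refine ⟨L * (⌈(p : ℝ) * p / ε⌉₊ + 1), fun N hN => ?_⟩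
  set b := N / L with hbdef
  have hbN : b * L ≤ N := Nat.div_mul_le_self N L
  refine ⟨fam L p k b, ?_, ?_, ?_, ?_, ?_⟩
  · -- on ground
    intro A hA
    obtain ⟨β, i, j, hβ, hi, hj, rfl⟩ := mem_fam_iff.mp hA
    exact blockSet_subset hLdef hp0 hβ hi hj hbN
  · -- uniform
    intro A hA
    obtain ⟨β, i, j, hβ, hi, hj, rfl⟩ := mem_fam_iff.mp hA
    exact card_blockSet hLdef hk3 hkp hi hj
  · -- intersecting
    intro A hA B hB hAB
    obtain ⟨β, i, j, hβ, hi, hj, rfl⟩ := mem_fam_iff.mp hA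
    obtain ⟨β', i', j', hβ', hi', hj', rfl⟩ := mem_fam_iff.mp hB
    have hne : ¬(β = β' ∧ i = i' ∧ j = j') := by
      rintro ⟨rfl, rfl, rfl⟩; exact hAB rfl
    exact le_trans (inter_card_le_one hLdef hk3 hkp hp hi hj hi' hj' hne) ht
  · -- max cover free
    intro A hA hsub
    obtain ⟨β, i, j, hβ, hi, hj, rfl⟩ := mem_fam_iff.mp hA
    have hpriv : privE L p β i j ∈ blockSet L p k β i j := Finset.mem_insert_self _ _
    have := hsub hpriv
    rw [Finset.mem_biUnion] at this
    obtain ⟨B, hB, hmem⟩ := this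
    have hBne : B ≠ blockSet L p k β i j := Finset.ne_of_mem_erase hB
    have hBfam : B ∈ fam L p k b := Finset.mem_of_mem_erase hB
    obtain ⟨β', i', j', hβ', hi', hj', rfl⟩ := mem_fam_iff.mp hBfam
    obtain ⟨h1, h2, h3⟩ :=
      priv_mem_blockSet_decode hLdef hi hj hi' hj' hk3 hkp (by simpa using hmem)
    exact hBne (by rw [h1, h2, h3])
  · -- size
    have hcard := card_fam (b := b) hLdef hk3 hkp
    rw [hcard]
    have hbB : (⌈(p : ℝ) * p / ε⌉₊ + 1) ≤ b := by
      rw [hbdef, Nat.le_div_iff_mul_le hL0]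
      calc (⌈(p : ℝ) * p / ε⌉₊ + 1) * L = L * (⌈(p : ℝ) * p / ε⌉₊ + 1) := by ring
        _ ≤ N := hN
    have hNle : (N : ℝ) ≤ (b : ℝ) * L + L := by
      have h1 := Nat.div_add_mod N L
      have h2 : N % L < L := Nat.mod_lt N hL0
      have h3 : N ≤ L * b + L := by
        calc N = L * b + N % L := by rw [hbdef]; exact h1.symm
          _ ≤ L * b + L := Nat.add_le_add_left h2.le _
      have h4 := (Nat.cast_le (α := ℝ)).mpr h3
      push_cast at h4
      linarith
    have hbε : (p : ℝ) * p ≤ (b : ℝ) * ε := by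
      have h1 : (p : ℝ) * p / ε ≤ (⌈(p : ℝ) * p / ε⌉₊ : ℝ) := Nat.le_ceil _
      have h2 : ((⌈(p : ℝ) * p / ε⌉₊ : ℝ) + 1) ≤ (b : ℝ) := by exact_mod_cast hbB
      have h3 : (p : ℝ) * p / ε ≤ (b : ℝ) := by linarith
      calc (p : ℝ) * p = ((p : ℝ) * p / ε) * ε := by field_simp
        _ ≤ (b : ℝ) * ε := mul_le_mul_of_nonneg_right h3 hε.le
    have hLnn : (0 : ℝ) ≤ (L : ℝ) := Nat.cast_nonneg L
    have hgoal : C * (N : ℝ) ≤ (b : ℝ) * ((p : ℝ) * p) := by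
      nlinarith [mul_le_mul_of_nonneg_left hNle hC0.le]
    calc C * (N : ℝ) ≤ (b : ℝ) * ((p : ℝ) * p) := hgoal
      _ = ((b * (p * p) : ℕ) : ℝ) := by push_cast; ring

/-- Let `t < k − 1` be positive integers and `0 < C < 1` real.
Then for all sufficiently large `N` there exists a maximally cover-free, at most
`t`-intersecting, `k`-uniform family `𝓗 ⊆ 2^[N]` with `|𝓗| ≥ C·N`. -/
theorem stmt13 (k t : ℕ) (hk : 0 < k) (ht : 0 < t) (htk : t < k - 1)
    (C : ℝ) (hC0 : 0 < C) (hC1 : C < 1) :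
    ∃ N₀ : ℕ, ∀ N : ℕ, N₀ ≤ N →
      ∃ H : Finset (Finset ℕ), OnGround N H ∧ Uniform k H ∧
        AtMostIntersecting t H ∧ MaxCoverFree H ∧ C * (N : ℝ) ≤ H.card := by
  obtain ⟨N₀, h⟩ := stmt13' k t hk ht htk C hC0 hC1
  refine ⟨N₀, fun N hN => ?_⟩
  obtain ⟨H, h1, h2, h3, h4, h5⟩ := h N hN
  exact ⟨H, h1, h2, h3, h4, h5⟩
end

section
/- Let k, t be positive integers with t < k − 1, and let C be a real number with 0 < C < 1. Then for all sufficiently large N, the maximum size ν(N,k,t) of a maximally cover-free, at most t-intersecting, k-uniform family 𝓗 ⊆ 2^[N] satisfies C·N ≤ ν(N,k,t) < N. In particular, ν(N,k,t)/N → 1 as N → ∞. -/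
open Finset

/-- `ν(N,k,t)`: the maximum size of a maximally cover-free, at most
`t`-intersecting, `k`-uniform family of subsets of `[N]`. -/
noncomputable def nuMax (N k t : ℕ) : ℕ :=
  sSup {m | ∃ H : Finset (Finset ℕ),
    OnGround N H ∧ Uniform k H ∧ AtMostIntersecting t H ∧ MaxCoverFree H ∧
    H.card = m}

namespace Stmt14Aux

/-- Encoding of pool element `(j, y)` into `[N]`. -/
def enc (N k p j y : ℕ) : ℕ := N - (k-1)*p + 1 + (j*p + y)

/-- the `j`-th point of the line determined by index `i` (mod `p`). -/
def line (p i j : ℕ) : ℕ := (i % p + (i / p) * j) % p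

def Aset (N k p i : ℕ) : Finset ℕ :=
  insert (i+1) ((Finset.range (k-1)).image (fun j => enc N k p j (line p i j)))

def Hfam (N k p m : ℕ) : Finset (Finset ℕ) := (Finset.range m).image (Aset N k p)

lemma line_lt {p : ℕ} (hp0 : 0 < p) (i j : ℕ) : line p i j < p := Nat.mod_lt _ hp0

lemma enc_inj {N k p j y j' y' : ℕ} (hy : y < p) (hy' : y' < p)
    (h : enc N k p j y = enc N k p j' y') : j = j' ∧ y = y' := by
  have hp0 : 0 < p := by omega
  have h2 : j * p + y = j' * p + y' := by unfold enc at h; omega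
  have hyy : y = y' := by
    have h3 := congrArg (· % p) h2
    simpa [mul_comm, Nat.mul_add_mod, Nat.mod_eq_of_lt hy, Nat.mod_eq_of_lt hy'] using h3
  refine ⟨Nat.eq_of_mul_eq_mul_right hp0 ?_, hyy⟩
  omega

lemma mem_Aset {N k p i x : ℕ} :
    x ∈ Aset N k p i ↔ x = i + 1 ∨ ∃ j, j < k - 1 ∧ enc N k p j (line p i j) = x := by
  simp [Aset, Finset.mem_insert, Finset.mem_image, Finset.mem_range]

lemma enc_big {N k p m i j y : ℕ} (hi : i < m) (hmN : m + (k-1)*p ≤ N) :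
    i + 1 < enc N k p j y := by
  unfold enc
  have h1 : (k-1)*p ≤ N := by omega
  omega

lemma enc_le {N k p j y : ℕ} (hq : (k-1)*p ≤ N) (hj : j < k - 1) (hy : y < p) :
    enc N k p j y ≤ N := by
  unfold enc
  have h1 : (j+1)*p ≤ (k-1)*p := Nat.mul_le_mul_right p (by omega)
  have h2 : (j+1)*p = j*p + p := by ring
  omega

lemma line_eq_unique {p k : ℕ} (hp : p.Prime) (hkp : k ≤ p) {i i' j j' : ℕ}
    (hi : i < p * p) (hi' : i' < p * p) (hne : i ≠ i')
    (hj : j < k - 1) (hj' : j' < k - 1)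
    (h1 : line p i j = line p i' j) (h2 : line p i j' = line p i' j') : j = j' := by
  haveI : Fact p.Prime := ⟨hp⟩
  have hp0 : 0 < p := hp.pos
  by_contra hjj
  have E1 : ((i % p : ℕ) : ZMod p) + ((i / p : ℕ) : ZMod p) * (j : ZMod p)
      = ((i' % p : ℕ) : ZMod p) + ((i' / p : ℕ) : ZMod p) * (j : ZMod p) := by
    have := congrArg (Nat.cast : ℕ → ZMod p) h1
    simpa [line, ZMod.natCast_mod, Nat.cast_add, Nat.cast_mul] using this
  have E2 : ((i % p : ℕ) : ZMod p) + ((i / p : ℕ) : ZMod p) * (j' : ZMod p)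
      = ((i' % p : ℕ) : ZMod p) + ((i' / p : ℕ) : ZMod p) * (j' : ZMod p) := by
    have := congrArg (Nat.cast : ℕ → ZMod p) h2
    simpa [line, ZMod.natCast_mod, Nat.cast_add, Nat.cast_mul] using this
  have key : (((i / p : ℕ) : ZMod p) - ((i' / p : ℕ) : ZMod p))
      * ((j : ZMod p) - (j' : ZMod p)) = 0 := by linear_combination E1 - E2
  rcases mul_eq_zero.mp key with hb | hjz
  · have hb' : ((i / p : ℕ) : ZMod p) = ((i' / p : ℕ) : ZMod p) := by
      linear_combination hb
    have hd : i / p = i' / p := by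
      have v1 := ZMod.val_cast_of_lt (show i / p < p from (Nat.div_lt_iff_lt_mul hp0).mpr hi)
      have v2 := ZMod.val_cast_of_lt (show i' / p < p from (Nat.div_lt_iff_lt_mul hp0).mpr hi')
      rw [← v1, ← v2, hb']
    have ha' : ((i % p : ℕ) : ZMod p) = ((i' % p : ℕ) : ZMod p) := by
      rw [hd] at E1
      exact add_right_cancel E1
    have hmod : i % p = i' % p := by
      have v1 := ZMod.val_cast_of_lt (Nat.mod_lt i hp0)
      have v2 := ZMod.val_cast_of_lt (Nat.mod_lt i' hp0)
      rw [← v1, ← v2, ha']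
    exact hne (by rw [← Nat.div_add_mod i p, ← Nat.div_add_mod i' p, hd, hmod])
  · have : (j : ZMod p) = (j' : ZMod p) := by linear_combination hjz
    have v1 := ZMod.val_cast_of_lt (show j < p by omega)
    have v2 := ZMod.val_cast_of_lt (show j' < p by omega)
    exact hjj (by rw [← v1, ← v2, this])

lemma card_Aset {N k p m i : ℕ} (hp0 : 0 < p) (hk : 1 ≤ k)
    (hi : i < m) (hmN : m + (k-1)*p ≤ N) : (Aset N k p i).card = k := by
  rw [Aset, Finset.card_insert_of_notMem, Finset.card_image_of_injOn,
    Finset.card_range]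
  · omega
  · intro j _ j' _ heq
    exact (enc_inj (line_lt hp0 i j) (line_lt hp0 i j') heq).1
  · simp only [Finset.mem_image, Finset.mem_range, not_exists, not_and]
    intro j _ heq
    have := enc_big (j := j) (y := line p i j) hi hmN
    omega

lemma private_unique {N k p m i i' : ℕ} (hi : i < m) (hmN : m + (k-1)*p ≤ N)
    (hmem : i + 1 ∈ Aset N k p i') : i = i' := by
  rcases mem_Aset.mp hmem with h | ⟨j, _, heq⟩
  · omega
  · have := enc_big (j := j) (y := line p i' j) hi hmN
    omega

lemma mem_pool {N k p m i i' x : ℕ} (hp0 : 0 < p) (hi : i < m) (hi' : i' < m) (hne : i ≠ i')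
    (hmN : m + (k-1)*p ≤ N)
    (hx : x ∈ Aset N k p i) (hx' : x ∈ Aset N k p i') :
    ∃ j, j < k - 1 ∧ enc N k p j (line p i j) = x ∧ line p i j = line p i' j := by
  rcases mem_Aset.mp hx with h | ⟨j, hj, heq⟩
  · exfalso; subst h; exact hne (private_unique hi hmN hx')
  rcases mem_Aset.mp hx' with h' | ⟨j', hj', heq'⟩
  · exfalso
    have : i' = i := private_unique hi' hmN (h' ▸ hx)
    omega
  obtain ⟨hjj, hll⟩ := enc_inj (line_lt hp0 i j) (line_lt hp0 i' j') (heq.trans heq'.symm)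
  subst hjj
  exact ⟨j, hj, heq, hll⟩

lemma inter_card {N k p m : ℕ} (hp : p.Prime) (hkp : k ≤ p) (hm : m ≤ p*p)
    (hmN : m + (k-1)*p ≤ N) {i i' : ℕ} (hi : i < m) (hi' : i' < m) (hne : i ≠ i') :
    (Aset N k p i ∩ Aset N k p i').card ≤ 1 := by
  rw [Finset.card_le_one]
  intro x hx y hy
  rw [Finset.mem_inter] at hx hy
  obtain ⟨jx, hjx, hex, hlx⟩ := mem_pool hp.pos hi hi' hne hmN hx.1 hx.2
  obtain ⟨jy, hjy, hey, hly⟩ := mem_pool hp.pos hi hi' hne hmN hy.1 hy.2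
  have : jx = jy := line_eq_unique hp hkp (by omega) (by omega) hne hjx hjy hlx hly
  rw [← hex, ← hey, this]

lemma Hfam_good (N k p m t : ℕ) (hp : p.Prime) (hk3 : 3 ≤ k) (hkp : k ≤ p)
    (ht : 1 ≤ t) (hm : m ≤ p*p) (hmN : m + (k-1)*p ≤ N) :
    ∃ H : Finset (Finset ℕ),
      (∀ A ∈ H, A ⊆ Finset.Icc 1 N) ∧ (∀ A ∈ H, A.card = k) ∧
      (∀ A ∈ H, ∀ B ∈ H, A ≠ B → (A ∩ B).card ≤ t) ∧
      (∀ A ∈ H, ¬ A ⊆ (H.erase A).biUnion id) ∧ H.card = m := by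
  have hp0 : 0 < p := hp.pos
  have hq : (k-1)*p ≤ N := by omega
  refine ⟨Hfam N k p m, ?_, ?_, ?_, ?_, ?_⟩
  · -- OnGround
    intro A hA
    simp only [Hfam, Finset.mem_image, Finset.mem_range] at hA
    obtain ⟨i, hi, rfl⟩ := hA
    intro x hx
    rw [Finset.mem_Icc]
    rcases mem_Aset.mp hx with h | ⟨j, hj, heq⟩
    · omega
    · have h1 := enc_le (y := line p i j) hq hj (line_lt hp0 i j)
      have h2 := enc_big (j := j) (y := line p i j) hi hmN
      omega
  · -- Uniform
    intro A hA
    simp only [Hfam, Finset.mem_image, Finset.mem_range] at hA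
    obtain ⟨i, hi, rfl⟩ := hA
    exact card_Aset hp0 (by omega) hi hmN
  · -- AtMostIntersecting
    intro A hA B hB hAB
    simp only [Hfam, Finset.mem_image, Finset.mem_range] at hA hB
    obtain ⟨i, hi, rfl⟩ := hA
    obtain ⟨i', hi', rfl⟩ := hB
    have hne : i ≠ i' := fun h => hAB (by rw [h])
    exact le_trans (inter_card hp hkp hm hmN hi hi' hne) ht
  · -- MaxCoverFree
    intro A hA hsub
    simp only [Hfam, Finset.mem_image, Finset.mem_range] at hA
    obtain ⟨i, hi, rfl⟩ := hA
    have hx := hsub (Finset.mem_insert_self _ _)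
    rw [Finset.mem_biUnion] at hx
    obtain ⟨B, hB, hxB⟩ := hx
    rw [Finset.mem_erase] at hB
    obtain ⟨hBne, hBH⟩ := hB
    simp only [Hfam, Finset.mem_image, Finset.mem_range] at hBH
    obtain ⟨i', hi', rfl⟩ := hBH
    have : i = i' := private_unique hi hmN (by simpa using hxB)
    exact hBne (by rw [this])
  · -- card
    rw [Hfam, Finset.card_image_of_injOn, Finset.card_range]
    intro i hi i' hi' heq
    simp only [Finset.coe_range, Set.mem_Iio] at hi hi'
    exact private_unique hi hmN (heq ▸ Finset.mem_insert_self (i+1) _)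
lemma upper_bound (N k t m : ℕ) (hk2 : 2 ≤ k) (hN : 1 ≤ N)
    (hm : ∃ H : Finset (Finset ℕ), OnGround N H ∧ Uniform k H ∧
      AtMostIntersecting t H ∧ MaxCoverFree H ∧ H.card = m) :
    m ≤ N - 1 := by
  classical
  obtain ⟨H, hg, hu, -, hmcf, rfl⟩ := hm
  have key : ∀ A : Finset ℕ, ∃ x, A ∈ H → (x ∈ A ∧ x ∉ (H.erase A).biUnion id) := by
    intro A
    by_cases hA : A ∈ H
    · obtain ⟨x, hx1, hx2⟩ := Finset.not_subset.mp (hmcf A hA)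
      exact ⟨x, fun _ => ⟨hx1, hx2⟩⟩
    · exact ⟨0, fun h => absurd h hA⟩
  choose f hf using key
  have hfA : ∀ A ∈ H, f A ∈ A := fun A hA => (hf A hA).1
  have hfU : ∀ A ∈ H, f A ∉ (H.erase A).biUnion id := fun A hA => (hf A hA).2
  have hinj : Set.InjOn f ↑H := by
    intro A hA B hB hAB
    by_contra hne
    apply hfU A hA
    rw [Finset.mem_biUnion]
    refine ⟨B, Finset.mem_erase.mpr ⟨fun h => hne h.symm, hB⟩, ?_⟩
    show f A ∈ B
    rw [hAB]; exact hfA B hB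
  have hsub : H.image f ⊆ Finset.Icc 1 N := by
    intro x hx
    obtain ⟨A, hA, rfl⟩ := Finset.mem_image.mp hx
    exact hg A hA (hfA A hA)
  have hle : H.card ≤ N := by
    calc H.card = (H.image f).card := (Finset.card_image_of_injOn hinj).symm
    _ ≤ (Finset.Icc 1 N).card := Finset.card_le_card hsub
    _ = N := by simp
  have hneq : H.card ≠ N := by
    intro hcard
    have heq : H.image f = Finset.Icc 1 N :=
      Finset.eq_of_subset_of_card_le hsub
        (by rw [Finset.card_image_of_injOn hinj, hcard]; simp)
    obtain ⟨A, hA⟩ : H.Nonempty := Finset.card_pos.mp (by omega)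
    have hAcard : A.card = k := hu A hA
    obtain ⟨y, hy⟩ : (A.erase (f A)).Nonempty := Finset.card_pos.mp
      (by rw [Finset.card_erase_of_mem (hfA A hA)]; omega)
    have hyA : y ∈ A := Finset.mem_of_mem_erase hy
    have hyne : y ≠ f A := Finset.ne_of_mem_erase hy
    have hyIcc : y ∈ Finset.Icc 1 N := hg A hA hyA
    rw [← heq, Finset.mem_image] at hyIcc
    obtain ⟨B, hB, hfB⟩ := hyIcc
    have hBA : B ≠ A := fun h => hyne (by rw [← hfB, h])
    apply hfU B hB
    rw [Finset.mem_biUnion]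
    refine ⟨A, Finset.mem_erase.mpr ⟨fun h => hBA h.symm, hA⟩, ?_⟩
    show f B ∈ A
    rw [hfB]; exact hyA
  omega

lemma empty_mem (N k t : ℕ) : (0 : ℕ) ∈ {m | ∃ H : Finset (Finset ℕ),
    OnGround N H ∧ Uniform k H ∧ AtMostIntersecting t H ∧ MaxCoverFree H ∧
    H.card = m} := by
  refine ⟨∅, ?_, ?_, ?_, ?_, rfl⟩ <;> intro A hA <;> simp at hA

lemma lower_ev (k t : ℕ) (hk3 : 3 ≤ k) (ht : 1 ≤ t) (C : ℝ) (hC1 : C < 1) :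
    ∃ N₀ : ℕ, 1 ≤ N₀ ∧ ∀ N, N₀ ≤ N → ∃ m : ℕ,
      C * N ≤ (m : ℝ) ∧ m ∈ {m | ∃ H : Finset (Finset ℕ),
        OnGround N H ∧ Uniform k H ∧ AtMostIntersecting t H ∧ MaxCoverFree H ∧
        H.card = m} := by
  obtain ⟨K₀, hK₀⟩ := exists_nat_gt (1 / (1 - C))
  set K := K₀ + 2 with hKdef
  have hK2 : 2 ≤ K := by omega
  have h1C : (0:ℝ) < 1 - C := by linarith
  have hKpos : (0:ℝ) < K := by positivity
  have hKC : 1 / (1 - C) < (K:ℝ) := by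
    have : (K₀:ℝ) ≤ (K:ℝ) := by exact_mod_cast (by omega : K₀ ≤ K)
    linarith
  have hCK : C ≤ 1 - 1 / (K : ℝ) := by
    have h2 : 1 < (K:ℝ) * (1 - C) := by
      rw [div_lt_iff₀ h1C] at hKC; linarith
    have h3 : 1 / (K:ℝ) < 1 - C := by
      rw [div_lt_iff₀ hKpos]; linarith
    linarith
  set D1 := 2*k*(k+1) with hD1
  set D2 := 2*k with hD2
  refine ⟨max (2*(K*D1)) ((2*(K*D2))*(2*(K*D2))) + 1, by omega, ?_⟩
  intro N hN
  set s := Nat.sqrt N with hs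
  obtain ⟨p, hp, hnp, hp2n⟩ := Nat.exists_prime_lt_and_le_two_mul
    (max k (s + 1)) (by omega)
  have hkp : k ≤ p := le_trans (le_max_left _ _) hnp.le
  have hsp : s + 1 ≤ p := le_trans (le_max_right _ _) hnp.le
  have hNpp : N < p * p :=
    lt_of_lt_of_le (Nat.lt_succ_sqrt N) (Nat.mul_le_mul hsp hsp)
  -- key counting bound
  have hstep1 : p ≤ 2*k + 2*s + 2 := by omega
  have hstep2 : K*((k-1)*p) ≤ K*D1 + K*(D2*s) := by
    have h1 : (k-1)*p ≤ (k-1)*(2*k+2*s+2) := Nat.mul_le_mul_left _ hstep1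
    have h2 : (k-1)*(2*k+2*s+2) ≤ k*(2*k+2*s+2) :=
      Nat.mul_le_mul_right _ (by omega)
    have h3 : k*(2*k+2*s+2) = D1 + D2*s := by rw [hD1, hD2]; ring
    calc K*((k-1)*p) ≤ K*(D1 + D2*s) :=
          Nat.mul_le_mul_left _ (by omega)
      _ = K*D1 + K*(D2*s) := by ring
  have hstep3 : 2*(K*D1) ≤ N := by omega
  have hs2 : 2*(K*D2) ≤ s := Nat.le_sqrt.mpr (by omega)
  have hstep4 : 2*(K*(D2*s)) ≤ N := by
    calc 2*(K*(D2*s)) = (2*(K*D2))*s := by ring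
    _ ≤ s*s := Nat.mul_le_mul_right s hs2
    _ ≤ N := Nat.sqrt_le N
  have hmain : K*((k-1)*p) ≤ N := by
    have := hstep2
    linarith
  obtain ⟨q, hqdef⟩ : ∃ q, q = (k-1)*p := ⟨_, rfl⟩
  have hKq : K*q ≤ N := by rw [hqdef]; exact hmain
  have hq1 : 1 ≤ q := by
    rw [hqdef]
    have : 1*1 ≤ (k-1)*p := Nat.mul_le_mul (by omega) (by omega)
    omega
  have h2q : 2*q ≤ N := le_trans (Nat.mul_le_mul_right q hK2) hKq
  set m := N - q with hm
  have hmN : m + (k-1)*p ≤ N := by rw [← hqdef]; omega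
  have hmpp : m ≤ p*p := le_trans (Nat.sub_le N q) hNpp.le
  obtain ⟨H, hg, hu, hai, hmcf, hcard⟩ :=
    Hfam_good N k p m t hp hk3 hkp ht hmpp hmN
  refine ⟨m, ?_, H, hg, hu, hai, hmcf, hcard⟩
  -- real arithmetic
  have hqN : q ≤ N := by omega
  have hmR : (m:ℝ) = (N:ℝ) - q := by
    rw [hm]; push_cast [Nat.cast_sub hqN]; ring
  have hKqR : (K:ℝ) * q ≤ N := by exact_mod_cast hKq
  have hqR : (q:ℝ) ≤ N / K := by
    rw [le_div_iff₀ hKpos]; linarith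
  have hNnn : (0:ℝ) ≤ N := Nat.cast_nonneg N
  have : C * N ≤ (1 - 1/(K:ℝ)) * N := mul_le_mul_of_nonneg_right hCK hNnn
  have hNK : (1 - 1/(K:ℝ)) * N = N - N/K := by ring
  rw [hmR]
  linarith

end Stmt14Aux

open Filter Stmt14Aux in
/-- Let `t < k − 1` be positive integers and `0 < C < 1` real.
Then for all sufficiently large `N`, `C·N ≤ ν(N,k,t) < N`; in particular
`ν(N,k,t)/N → 1` as `N → ∞`. -/
theorem stmt14 (k t : ℕ) (hk : 0 < k) (ht : 0 < t) (htk : t < k - 1)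
    (C : ℝ) (hC0 : 0 < C) (hC1 : C < 1) :
    (∃ N₀ : ℕ, ∀ N : ℕ, N₀ ≤ N →
      C * (N : ℝ) ≤ (nuMax N k t : ℝ) ∧ (nuMax N k t : ℝ) < N) ∧
    Tendsto (fun N : ℕ => (nuMax N k t : ℝ) / N) atTop (nhds 1) := by
  have hk3 : 3 ≤ k := by omega
  have ht1 : 1 ≤ t := ht
  have main : ∀ C' : ℝ, C' < 1 → ∃ N₀ : ℕ, 1 ≤ N₀ ∧ ∀ N, N₀ ≤ N →
      C' * N ≤ (nuMax N k t : ℝ) ∧ (nuMax N k t : ℝ) < N := by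
    intro C' hC'
    obtain ⟨N₀, hN₀1, h⟩ := lower_ev k t hk3 ht1 C' hC'
    refine ⟨N₀, hN₀1, fun N hN => ?_⟩
    obtain ⟨m, hmC, hmem⟩ := h N hN
    have hN1 : 1 ≤ N := le_trans hN₀1 hN
    have hbdd : ∀ x ∈ {m | ∃ H : Finset (Finset ℕ),
        OnGround N H ∧ Uniform k H ∧ AtMostIntersecting t H ∧ MaxCoverFree H ∧
        H.card = m}, x ≤ N - 1 := fun x hx => upper_bound N k t x (by omega) hN1 hx
    have h1 : m ≤ nuMax N k t := le_csSup ⟨N - 1, hbdd⟩ hmem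
    have h2 : nuMax N k t ≤ N - 1 := csSup_le ⟨0, empty_mem N k t⟩ hbdd
    constructor
    · exact le_trans hmC (by exact_mod_cast h1)
    · exact_mod_cast (by omega : nuMax N k t < N)
  constructor
  · obtain ⟨N₀, -, h⟩ := main C hC1
    exact ⟨N₀, h⟩
  · rw [Metric.tendsto_atTop]
    intro ε hε
    set C' := max (1/2 : ℝ) (1 - ε/2) with hC'def
    have hC'1 : C' < 1 := by
      apply max_lt
      · norm_num
      · linarith
    obtain ⟨N₀, hN₀1, h⟩ := main C' hC'1
    refine ⟨N₀, fun n hn => ?_⟩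
    obtain ⟨h1, h2⟩ := h n hn
    have hn0 : (0:ℝ) < n := by exact_mod_cast lt_of_lt_of_le hN₀1 hn
    have hub : (nuMax n k t : ℝ)/n ≤ 1 := by
      rw [div_le_one hn0]; linarith
    have hlb : C' ≤ (nuMax n k t : ℝ)/n := by
      rw [le_div_iff₀ hn0]
      exact h1
    have hmax := le_max_right (1/2 : ℝ) (1 - ε/2)
    rw [Real.dist_eq, abs_sub_lt_iff]
    constructor
    · linarith
    · linarith
end

section
/- Let k, n be positive integers with k ≤ n. Then every maximally cover-free, k-uniform family 𝓗 ⊆ 2^[n] satisfies |𝓗| ≤ n − k + 1, and this bound is attained: the family 𝓗 = {[k−1] ∪ {x} : x ∈ {k, k+1, …, n}} is maximally cover-free, k-uniform, and has size n − k + 1. -/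
open Finset

/-- For positive integers `k ≤ n`, every maximally cover-free,
`k`-uniform family `𝓗 ⊆ 2^[n]` satisfies `|𝓗| ≤ n − k + 1`, and the bound is
attained by the family `{[k−1] ∪ {x} : x ∈ {k, …, n}}`. -/
theorem stmt17 (n k : ℕ) (hk : 0 < k) (hkn : k ≤ n) :
    (∀ H : Finset (Finset ℕ), OnGround n H → Uniform k H → MaxCoverFree H →
      H.card ≤ n - k + 1) ∧
    (OnGround n ((Finset.Icc k n).image (fun x => insert x (Finset.Icc 1 (k - 1)))) ∧
     Uniform k ((Finset.Icc k n).image (fun x => insert x (Finset.Icc 1 (k - 1)))) ∧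
     MaxCoverFree ((Finset.Icc k n).image (fun x => insert x (Finset.Icc 1 (k - 1)))) ∧
     ((Finset.Icc k n).image (fun x => insert x (Finset.Icc 1 (k - 1)))).card
       = n - k + 1) := by
  have hnotmem : ∀ x, k ≤ x → x ∉ Finset.Icc 1 (k-1) := by
    intro x hx hmem
    have := (Finset.mem_Icc.mp hmem).2
    omega
  constructor
  · intro H hg hu hm
    rcases H.eq_empty_or_nonempty with rfl | ⟨A₀, hA₀⟩
    · simp
    have hx : ∀ A : Finset ℕ, ∃ x, A ∈ H → x ∈ A ∧ x ∉ (H.erase A).biUnion id := by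
      intro A
      by_cases hA : A ∈ H
      · obtain ⟨x, hx1, hx2⟩ := Finset.not_subset.mp (hm A hA)
        exact ⟨x, fun _ => ⟨hx1, hx2⟩⟩
      · exact ⟨0, fun h => absurd h hA⟩
    choose f hf using hx
    have key : (H.erase A₀).card ≤ (Finset.Icc 1 n \ A₀).card := by
      apply Finset.card_le_card_of_injOn f
      · intro A hA
        have hAH := Finset.mem_of_mem_erase hA
        have hAne := Finset.ne_of_mem_erase hA
        obtain ⟨h1, h2⟩ := hf A hAH
        refine Finset.mem_sdiff.mpr ⟨hg A hAH h1, fun hmem => h2 ?_⟩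
        exact Finset.mem_biUnion.mpr ⟨A₀, Finset.mem_erase.mpr ⟨hAne.symm, hA₀⟩, hmem⟩
      · intro A hA B hB hfAB
        by_contra hne
        have hAH := Finset.mem_of_mem_erase hA
        have hBH := Finset.mem_of_mem_erase hB
        obtain ⟨hA1, hA2⟩ := hf A hAH
        obtain ⟨hB1, _⟩ := hf B hBH
        exact hA2 (Finset.mem_biUnion.mpr ⟨B, Finset.mem_erase.mpr ⟨fun h => hne h.symm, hBH⟩, hfAB ▸ hB1⟩)
    have hcard : (Finset.Icc 1 n \ A₀).card = n - k := by
      rw [Finset.card_sdiff_of_subset (hg A₀ hA₀), Nat.card_Icc, hu A₀ hA₀]; omega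
    have := Finset.card_erase_add_one hA₀
    omega
  · refine ⟨?_, ?_, ?_, ?_⟩
    · intro A hA
      obtain ⟨x, hx, rfl⟩ := Finset.mem_image.mp hA
      rw [Finset.mem_Icc] at hx
      intro y hy
      rcases Finset.mem_insert.mp hy with rfl | hy
      · exact Finset.mem_Icc.mpr ⟨by omega, hx.2⟩
      · rw [Finset.mem_Icc] at hy ⊢; omega
    · intro A hA
      obtain ⟨x, hx, rfl⟩ := Finset.mem_image.mp hA
      rw [Finset.mem_Icc] at hx
      rw [Finset.card_insert_of_notMem (hnotmem x hx.1), Nat.card_Icc]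
      omega
    · intro A hA hsub
      obtain ⟨x, hx, rfl⟩ := Finset.mem_image.mp hA
      rw [Finset.mem_Icc] at hx
      have hxmem : x ∈ insert x (Finset.Icc 1 (k-1)) := Finset.mem_insert_self _ _
      obtain ⟨B, hB, hxB⟩ := Finset.mem_biUnion.mp (hsub hxmem)
      obtain ⟨hBne, hBmem⟩ := Finset.mem_erase.mp hB
      obtain ⟨y, hy, rfl⟩ := Finset.mem_image.mp hBmem
      rcases Finset.mem_insert.mp hxB with rfl | hxB
      · exact hBne rfl
      · exact hnotmem x hx.1 hxB
    · rw [Finset.card_image_of_injOn, Nat.card_Icc]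
      · omega
      · intro a ha b hb hab
        simp only [Finset.coe_Icc, Set.mem_Icc] at ha hb
        simp only at hab
        have : a ∈ insert b (Finset.Icc 1 (k-1)) := hab ▸ Finset.mem_insert_self a _
        rcases Finset.mem_insert.mp this with h | h
        · exact h
        · exact absurd h (hnotmem a ha.1)
end

section
/- There exists a family 𝓗 ⊆ 2^[7] consisting of seven 3-element subsets of [7] such that |A ∩ B| = 1 for all distinct A, B ∈ 𝓗 (the Fano plane). Consequently, ϖ(7,3,1) = 7, i.e., the upper bound ((k² + kt + 2t)/(k² − kt + 2t))·(k/t + 1) for n = (1/2)·k·(k/t+1) + 1 is attained when k = 3, t = 1, n = 7. -/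
open Finset

def Fano : Finset (Finset ℕ) :=
  {({1,2,3} : Finset ℕ), {1,4,5}, {1,6,7}, {2,4,6}, {2,5,7}, {3,4,7}, {3,5,6}}

lemma fano_props : OnGround 7 Fano ∧ Fano.card = 7 ∧ Uniform 3 Fano ∧
    ∀ A ∈ Fano, ∀ B ∈ Fano, A ≠ B → (A ∩ B).card = 1 := by
  unfold OnGround Uniform Fano; refine ⟨?_, ?_, ?_, ?_⟩ <;> decide

lemma upper (H : Finset (Finset ℕ)) (h1 : OnGround 7 H) (h2 : Uniform 3 H)
    (h3 : AtMostIntersecting 1 H) : H.card ≤ 7 := by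
  have hdisj : ∀ A ∈ H, ∀ B ∈ H, A ≠ B →
      Disjoint (A.powersetCard 2) (B.powersetCard 2) := by
    intro A hA B hB hne
    rw [Finset.disjoint_left]
    intro s hsA hsB
    rw [Finset.mem_powersetCard] at hsA hsB
    have hsub : s ⊆ A ∩ B := Finset.subset_inter hsA.1 hsB.1
    have := (Finset.card_le_card hsub).trans (h3 A hA B hB hne)
    omega
  have hcard : (H.biUnion (fun A => A.powersetCard 2)).card =
      ∑ A ∈ H, (A.powersetCard 2).card := Finset.card_biUnion hdisj
  have hsum : ∑ A ∈ H, (A.powersetCard 2).card = 3 * H.card := by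
    rw [Finset.sum_congr rfl (fun A hA => ?_), Finset.sum_const, smul_eq_mul, mul_comm]
    rw [Finset.card_powersetCard, h2 A hA]; rfl
  have hsub : H.biUnion (fun A => A.powersetCard 2) ⊆ (Finset.Icc 1 7).powersetCard 2 := by
    intro s hs
    rw [Finset.mem_biUnion] at hs
    obtain ⟨A, hA, hsA⟩ := hs
    rw [Finset.mem_powersetCard] at hsA ⊢
    exact ⟨hsA.1.trans (h1 A hA), hsA.2⟩
  have h21 : ((Finset.Icc 1 7 : Finset ℕ).powersetCard 2).card = 21 := by decide
  have := Finset.card_le_card hsub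
  omega

/-- There is a family of seven 3-element subsets of `[7]` in which
any two distinct members meet in exactly one element (the Fano plane);
consequently `ϖ(7,3,1) = 7`, attaining the upper bound
`((k² + kt + 2t)/(k² − kt + 2t))·(k/t + 1)` for `k = 3`, `t = 1`, `n = 7`. -/
theorem stmt18 :
    (∃ H : Finset (Finset ℕ), OnGround 7 H ∧ H.card = 7 ∧ Uniform 3 H ∧
      ∀ A ∈ H, ∀ B ∈ H, A ≠ B → (A ∩ B).card = 1) ∧
    varpi 7 3 1 = 7 := by
  obtain ⟨hg, hc, hu, hi⟩ := fano_props
  refine ⟨⟨Fano, hg, hc, hu, hi⟩, ?_⟩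
  have hgreat : IsGreatest {m | ∃ H : Finset (Finset ℕ),
      OnGround 7 H ∧ Uniform 3 H ∧ AtMostIntersecting 1 H ∧ H.card = m} 7 := by
    constructor
    · exact ⟨Fano, hg, hu, fun A hA B hB hne => le_of_eq (hi A hA B hB hne), hc⟩
    · rintro m ⟨H, h1, h2, h3, rfl⟩
      exact upper H h1 h2 h3
  exact hgreat.csSup_eq
end
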